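/- arXiv:1101.0526 — 8 statements merged into one kernel-verified Lean document; each statement's English description precedes it below -/
import Mathlib

section
/- For every real number y > 0, the exponential integral satisfies ∫_y^∞ e^{-u}/u du = -γ - log y - Σ_{n≥1} (-1)^n y^n / (n · n!), where γ is the Euler–Mascheroni constant and the series on the right converges. -/
/-!
Integrating by parts against `log u` gives
`∫_y^∞ e^{-u}/u = -e^{-y} log y + ∫_y^∞ e^{-u} log u` and
`∫_0^y e^{-u} log u = (1 - e^{-y}) log y - ∫_0^y (1 - e^{-u})/u`.
The two integrals of `e^{-u} log u` add up to `Γ'(1) = -γ`, so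
`∫_y^∞ e^{-u}/u = -γ - log y + ∫_0^y (1 - e^{-u})/u`, and the last integral is computed
termwise from `(1 - e^{-u})/u = Σ_{n ≥ 0} (-u)^n/(n+1)!`.
-/

open Real MeasureTheory Set Filter Topology
open scoped Nat

namespace Real

theorem summable_pow_succ_div_succ_mul_factorial (x : ℝ) :
    Summable fun n : ℕ => x ^ (n + 1) / ((n + 1) * (n + 1)! : ℝ) := by
  refine ((summable_nat_add_iff 1).2 (summable_pow_div_factorial |x|)).of_norm_bounded
    fun n => ?_
  rw [norm_div, norm_pow, norm_eq_abs, norm_of_nonneg (by positivity)]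
  gcongr
  exact le_mul_of_one_le_left (by positivity) (by simp)

theorem hasSum_pow_div_factorial_succ {x : ℝ} (hx : x ≠ 0) :
    HasSum (fun n : ℕ => x ^ n / (n + 1)!) ((exp x - 1) / x) := by
  have hexp : HasSum (fun n : ℕ => x ^ n / n !) (exp x) := by
    rw [exp_eq_exp_ℝ]
    exact NormedSpace.expSeries_div_hasSum_exp x
  have h := ((hasSum_nat_add_iff' 1).2 hexp).div_const x
  rw [Finset.sum_range_one, pow_zero, Nat.factorial_zero, Nat.cast_one, div_one] at h
  have hterm : (fun n : ℕ => x ^ (n + 1) / (n + 1)! / x) = fun n => x ^ n / (n + 1)! :=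
    funext fun n => by rw [pow_succ, div_right_comm, mul_div_cancel_right₀ _ hx]
  rwa [hterm] at h

theorem integrableOn_exp_neg_mul_log_Ioi_zero :
    IntegrableOn (fun t => exp (-t) * log t) (Ioi 0) := by
  rw [← Ioc_union_Ioi_eq_Ioi zero_le_one]
  refine IntegrableOn.union ?_ ?_
  · exact (intervalIntegrable_iff_integrableOn_Ioc_of_le zero_le_one).1
      (intervalIntegral.intervalIntegrable_log'.continuousOn_mul (by fun_prop))
  · refine ((GammaIntegral_convergent two_pos).mono_set (Ioi_subset_Ioi zero_le_one)).mono'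
      (by fun_prop) ?_
    filter_upwards [ae_restrict_mem measurableSet_Ioi] with t (ht : 1 < t)
    rw [norm_mul, norm_of_nonneg (exp_pos _).le, norm_of_nonneg (log_nonneg ht.le),
      show (2:ℝ) - 1 = 1 by norm_num, rpow_one]
    gcongr
    linarith [log_le_sub_one_of_pos (zero_lt_one.trans ht)]

theorem integral_exp_neg_mul_log_Ioi_zero :
    ∫ t in Ioi 0, exp (-t) * log t = -eulerMascheroniConstant := by
  set I := ∫ t in Ioi 0, exp (-t) * log t
  have hI : ∫ t : ℝ in Ioi 0, (t : ℂ) ^ ((1 : ℂ) - 1) * (log t * exp (-t)) = I := by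
    rw [← integral_complex_ofReal]
    simp_rw [sub_self, Complex.cpow_zero, one_mul, Complex.ofReal_mul, mul_comm]
  have hΓ : HasDerivAt Complex.Gamma I 1 :=
    (hI ▸ Complex.hasDerivAt_GammaIntegral (by norm_num)).congr_of_eventuallyEq <|
      ((Complex.continuous_re.tendsto 1).eventually (lt_mem_nhds (by norm_num))).mono
        fun s hs => Complex.Gamma_eq_integral hs
  have hΓ_real := hΓ.real_of_complex
  simp only [Complex.ofReal_re, Complex.Gamma_ofReal] at hΓ_real
  exact hΓ_real.unique hasDerivAt_Gamma_one

theorem integrableOn_exp_neg_div_Ioi {y : ℝ} (hy : 0 < y) :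
    IntegrableOn (fun u => exp (-u) / u) (Ioi y) := by
  refine ((integrableOn_exp_neg_Ioi y).div_const y).mono'
    (measurable_neg.exp.div measurable_id).aestronglyMeasurable ?_
  filter_upwards [ae_restrict_mem measurableSet_Ioi] with u (hu : y < u)
  rw [norm_div, norm_of_nonneg (exp_pos _).le, norm_of_nonneg (hy.trans hu).le]
  gcongr

theorem integral_exp_neg_div_Ioi_eq_integral_exp_neg_mul_log {y : ℝ} (hy : 0 < y) :
    ∫ u in Ioi y, exp (-u) / u = -(exp (-y) * log y) + ∫ u in Ioi y, exp (-u) * log u := by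
  have hlog : IntegrableOn (fun u => exp (-u) * log u) (Ioi y) :=
    integrableOn_exp_neg_mul_log_Ioi_zero.mono_set (Ioi_subset_Ioi hy.le)
  have hderiv : ∀ x ∈ Ioi y, HasDerivAt (fun u => exp (-u) * log u)
      (exp (-x) / x - exp (-x) * log x) x := fun x (hx : y < x) =>
    ((hasDerivAt_neg x).exp.mul (hasDerivAt_log (hy.trans hx).ne')).congr_deriv (by ring)
  have hlim : Tendsto (fun u => exp (-u) * log u) atTop (𝓝 0) := by
    refine (mul_zero (0:ℝ) ▸ (isLittleO_log_id_atTop.tendsto_div_nhds_zero).mul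
      (tendsto_pow_mul_exp_neg_atTop_nhds_zero 1)).congr' ?_
    filter_upwards [eventually_gt_atTop 0] with u hu
    simp only [id, pow_one]
    field_simp
  have h := integral_Ioi_of_hasDerivAt_of_tendsto
    (by fun_prop (disch := exact hy.ne') : ContinuousAt _ y).continuousWithinAt hderiv
    ((integrableOn_exp_neg_div_Ioi hy).sub hlog) hlim
  rw [integral_sub (integrableOn_exp_neg_div_Ioi hy) hlog] at h
  linarith

theorem one_sub_exp_neg_le (u : ℝ) : 1 - exp (-u) ≤ u := by
  linarith [add_one_le_exp (-u)]

theorem integrableOn_one_sub_exp_neg_div_Ioc (y : ℝ) :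
    IntegrableOn (fun u => (1 - exp (-u)) / u) (Ioc 0 y) := by
  refine (integrableOn_const measure_Ioc_lt_top.ne (C := (1 : ℝ))).mono'
    ((measurable_const.sub measurable_neg.exp).div measurable_id).aestronglyMeasurable ?_
  filter_upwards [ae_restrict_mem measurableSet_Ioc] with u ⟨hu, _⟩
  rw [norm_div, norm_of_nonneg (by simpa using hu.le), norm_of_nonneg hu.le,
    div_le_one hu]
  exact one_sub_exp_neg_le u

theorem tendsto_one_sub_exp_neg_mul_log_nhdsGT_zero :
    Tendsto (fun u => (1 - exp (-u)) * log u) (𝓝[>] 0) (𝓝 0) := by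
  have hlim : Tendsto (fun u => u * log u) (𝓝[>] 0) (𝓝 0) := by
    simpa using (continuous_mul_log.tendsto 0).mono_left nhdsWithin_le_nhds
  refine squeeze_zero_norm' ?_ (by simpa using hlim.norm)
  filter_upwards [self_mem_nhdsWithin] with u (hu : 0 < u)
  rw [norm_mul, norm_of_nonneg (by simpa using hu.le), norm_eq_abs, abs_of_pos hu]
  gcongr
  exact one_sub_exp_neg_le u

theorem integral_exp_neg_mul_log_Ioc {y : ℝ} (hy : 0 < y) :
    ∫ u in Ioc 0 y, exp (-u) * log u =
      (1 - exp (-y)) * log y - ∫ u in Ioc 0 y, (1 - exp (-u)) / u := by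
  have hlog : IntegrableOn (fun u => exp (-u) * log u) (Ioc 0 y) :=
    integrableOn_exp_neg_mul_log_Ioi_zero.mono_set Ioc_subset_Ioi_self
  have hderiv : ∀ x ∈ Ioo 0 y, HasDerivAt (fun u => (1 - exp (-u)) * log u)
      (exp (-x) * log x + (1 - exp (-x)) / x) x := fun x hx =>
    (((hasDerivAt_neg x).exp.const_sub 1).mul (hasDerivAt_log hx.1.ne')).congr_deriv (by ring)
  have h := intervalIntegral.integral_eq_sub_of_hasDerivAt_of_tendsto hy hderiv
    ((intervalIntegrable_iff_integrableOn_Ioc_of_le hy.le).2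
      (hlog.add (integrableOn_one_sub_exp_neg_div_Ioc y)))
    tendsto_one_sub_exp_neg_mul_log_nhdsGT_zero
    ((by fun_prop (disch := exact hy.ne') : ContinuousAt _ y).tendsto.mono_left
      nhdsWithin_le_nhds)
  rw [intervalIntegral.integral_of_le hy.le,
    integral_add hlog (integrableOn_one_sub_exp_neg_div_Ioc y)] at h
  linarith

theorem integral_exp_neg_div_Ioi_eq_integral_one_sub_exp_neg_div {y : ℝ} (hy : 0 < y) :
    ∫ u in Ioi y, exp (-u) / u =
      -eulerMascheroniConstant - log y + ∫ u in Ioc 0 y, (1 - exp (-u)) / u := by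
  have hsplit := setIntegral_union (Ioc_disjoint_Ioi le_rfl) measurableSet_Ioi
    (integrableOn_exp_neg_mul_log_Ioi_zero.mono_set Ioc_subset_Ioi_self)
    (integrableOn_exp_neg_mul_log_Ioi_zero.mono_set (Ioi_subset_Ioi hy.le))
  rw [Ioc_union_Ioi_eq_Ioi hy.le, integral_exp_neg_mul_log_Ioi_zero,
    integral_exp_neg_mul_log_Ioc hy] at hsplit
  rw [integral_exp_neg_div_Ioi_eq_integral_exp_neg_mul_log hy]
  linear_combination -hsplit

theorem hasSum_integral_one_sub_exp_neg_div_Ioc {y : ℝ} (hy : 0 ≤ y) :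
    HasSum (fun n : ℕ => -((-y) ^ (n + 1) / ((n + 1) * (n + 1)!)))
      (∫ u in Ioc 0 y, (1 - exp (-u)) / u) := by
  have hterm (n : ℕ) : ∫ u in Ioc 0 y, (-u) ^ n / (n + 1)! =
      -((-y) ^ (n + 1) / ((n + 1) * (n + 1)!)) := by
    rw [← intervalIntegral.integral_of_le hy, intervalIntegral.integral_div,
      intervalIntegral.integral_comp_neg (fun u => u ^ n), integral_pow]
    field_simp
    ring
  have hnorm (n : ℕ) : ∫ u in Ioc 0 y, ‖(-u) ^ n / (n + 1)!‖ =
      y ^ (n + 1) / ((n + 1) * (n + 1)!) := by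
    rw [setIntegral_congr_fun measurableSet_Ioc fun u (hu : u ∈ Ioc 0 y) => by
      rw [norm_div, norm_pow, norm_neg, norm_of_nonneg hu.1.le, norm_of_nonneg (by positivity)],
      ← intervalIntegral.integral_of_le hy, intervalIntegral.integral_div, integral_pow,
      zero_pow n.succ_ne_zero, sub_zero, div_div]
  have h := hasSum_integral_of_summable_integral_norm (μ := volume.restrict (Ioc 0 y))
    (fun n => (by fun_prop : Continuous fun u : ℝ => (-u) ^ n / (n + 1)!).integrableOn_Ioc)
    (by simpa only [hnorm] using summable_pow_succ_div_succ_mul_factorial y)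
  have hsum : ∀ u ∈ Ioc 0 y, ∑' n : ℕ, (-u) ^ n / (n + 1)! = (1 - exp (-u)) / u :=
    fun u hu => by
      rw [(hasSum_pow_div_factorial_succ (neg_ne_zero.2 hu.1.ne')).tsum_eq, div_neg, ← neg_div,
        neg_sub]
  simp only [hterm] at h
  rwa [setIntegral_congr_fun measurableSet_Ioc hsum] at h

end Real

/-- For every real `y > 0`,
`∫_y^∞ e^{-u}/u du = -γ - log y - Σ_{n ≥ 1} (-1)^n yⁿ/(n·n!)`,
where `γ` is the Euler–Mascheroni constant, and the series converges. -/
theorem exponential_integral_eq_euler_mascheroni_sub_log_sub_series (y : ℝ) (hy : 0 < y) :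
    Summable (fun n : ℕ => (-1) ^ (n + 1) * y ^ (n + 1) /
      ((n + 1) * Nat.factorial (n + 1))) ∧
    ∫ u in Set.Ioi y, Real.exp (-u) / u =
      -Real.eulerMascheroniConstant - Real.log y -
        ∑' n : ℕ, (-1) ^ (n + 1) * y ^ (n + 1) / ((n + 1) * Nat.factorial (n + 1)) := by
  have hterm : (fun n : ℕ => (-1) ^ (n + 1) * y ^ (n + 1) / ((n + 1) * (n + 1)! : ℝ)) =
      fun n => (-y) ^ (n + 1) / ((n + 1) * (n + 1)!) :=
    funext fun n => by rw [neg_pow y]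
  rw [hterm, integral_exp_neg_div_Ioi_eq_integral_one_sub_exp_neg_div hy,
    ← (hasSum_integral_one_sub_exp_neg_div_Ioc hy.le).tsum_eq, tsum_neg, sub_eq_add_neg]
  exact ⟨summable_pow_succ_div_succ_mul_factorial (-y), rfl⟩
end

section
/- Let K be a field of characteristic zero. If A, B ∈ K⟦z⟧ are D-finite formal power series, then their Hadamard product A * B is D-finite. -/
open PowerSeries

/-- The Hadamard product of two formal power series: termwise product of coefficients. -/
noncomputable def hadamardMul {K : Type*} [CommRing K] (A B : PowerSeries K) : PowerSeries K :=
  PowerSeries.mk fun n => coeff n A * coeff n B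

/-- A formal power series `A ∈ K⟦z⟧` is algebraic over `K(z)`: there is a nonzero
polynomial `P ∈ K[z][y]` with `P(A) = 0`. -/
def IsAlgebraicPS {K : Type*} [CommRing K] (A : PowerSeries K) : Prop :=
  ∃ P : Polynomial (Polynomial K), P ≠ 0 ∧
    Polynomial.eval₂ Polynomial.coeToPowerSeries.ringHom A P = 0

/-- `A` has Hadamard grade at most `d` over `K`: it is the Hadamard product of `d`
formal power series, each algebraic over `K(z)`. -/
def HadamardGradeLe {K : Type*} [CommRing K] (A : PowerSeries K) (d : ℕ) : Prop :=
  ∃ B : Fin d → PowerSeries K, (∀ i, IsAlgebraicPS (B i)) ∧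
    ∀ n, coeff n A = ∏ i, coeff n (B i)

/-- A formal power series `A ∈ K⟦z⟧` is D-finite: there are polynomials `p₀, …, p_m`,
not all zero, with `p_m A⁽ᵐ⁾ + ⋯ + p₁ A' + p₀ A = 0`. -/
def IsDFinitePS {K : Type*} [CommRing K] (A : PowerSeries K) : Prop :=
  ∃ (m : ℕ) (p : Fin (m + 1) → Polynomial K), (∃ i, p i ≠ 0) ∧
    ∑ i : Fin (m + 1), ((p i : PowerSeries K) * (⇑(PowerSeries.derivative K))^[i] A) = 0

/-- A formal power series is rational: `Q · A = P` with `Q(0) ≠ 0`. -/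
def IsRationalPS {K : Type*} [CommRing K] (A : PowerSeries K) : Prop :=
  ∃ P Q : Polynomial K, Q.coeff 0 ≠ 0 ∧ (Q : PowerSeries K) * A = (P : PowerSeries K)

/-!
Extend the coefficient sequence of `A ∈ K⟦z⟧` by zero to `ℤ`. Then multiplication by `z` becomes
the shift `a(n) ↦ a(n - 1)` and `d/dz` becomes `a(n) ↦ (n + 1) a(n + 1)`, at every `n ∈ ℤ`, so a
D-finite equation for `A` is the same thing as a nonzero linear recurrence with polynomial
coefficients holding on all of `ℤ`; going back, one expands the coefficients of the recurrence
in the falling factorial basis. Since the recurrence also holds at negative indices, no initial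
conditions are lost in either direction.

A sequence is P-recursive iff its shifts span a finite-dimensional `K(n)`-subspace of the
sequences taken modulo finitely supported ones (where nonzero polynomials in `n` are invertible).
The shifts of a termwise product lie in the product of the two subspaces, which is again
finite-dimensional; a linear dependency among them, after clearing denominators and multiplying
by a polynomial vanishing at the finitely many exceptional `n`, is a recurrence for the product.
-/

open scoped Polynomial
open Filter

section Recurrence

variable {R : Type*} [CommRing R]

noncomputable def recOp (a : ℤ → R) : R[X][X] →ₗ[R] ℤ → R :=
  Polynomial.lsum fun k => LinearMap.pi fun n => a (n + k) • Polynomial.leval (n : R)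

lemma recOp_apply (a : ℤ → R) (Q : R[X][X]) (n : ℤ) :
    recOp a Q n = Q.sum fun k q => q.eval (n : R) * a (n + k) := by
  simp [recOp, Polynomial.lsum_apply, Polynomial.sum, mul_comm]

@[simp]
lemma recOp_monomial (a : ℤ → R) (k : ℕ) (q : R[X]) (n : ℤ) :
    recOp a (Polynomial.monomial k q) n = q.eval (n : R) * a (n + k) := by
  simp [recOp_apply]

lemma recOp_C_mul (a : ℤ → R) (w : R[X]) (Q : R[X][X]) (n : ℤ) :
    recOp a (Polynomial.C w * Q) n = w.eval (n : R) * recOp a Q n := by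
  induction Q using Polynomial.induction_on' with
  | add Q Q' hQ hQ' => simp [mul_add, hQ, hQ']
  | monomial k q => simp [Polynomial.C_mul_monomial, mul_assoc]

def IsPRecursive (a : ℤ → R) : Prop :=
  ∃ Q : R[X][X], Q ≠ 0 ∧ recOp a Q = 0

theorem IsPRecursive.of_eventually [IsDomain R] {a : ℤ → R} {Q : R[X][X]} (hQ : Q ≠ 0)
    (h : ∀ᶠ n in cofinite, recOp a Q n = 0) : IsPRecursive a := by
  set T := (eventually_cofinite.1 h).toFinset
  let w : R[X] := ∏ t ∈ T, (Polynomial.X - Polynomial.C (t : R))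
  have hw : w ≠ 0 := Finset.prod_ne_zero_iff.2 fun t _ => Polynomial.X_sub_C_ne_zero _
  refine ⟨Polynomial.C w * Q, mul_ne_zero (Polynomial.C_ne_zero.2 hw) hQ, funext fun n => ?_⟩
  rw [recOp_C_mul, Pi.zero_apply, mul_eq_zero]
  by_cases hn : n ∈ T
  · exact Or.inl (Polynomial.eval_prod T _ (n : R) ▸ Finset.prod_eq_zero hn (by simp))
  · exact Or.inr (by simpa [T] using hn)

end Recurrence

section Germ

variable {K : Type*} [Field K] [CharZero K]

lemma eventually_eval_intCast_ne_zero {p : K[X]} (hp : p ≠ 0) :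
    ∀ᶠ n : ℤ in cofinite, p.eval (n : K) ≠ 0 :=
  eventually_cofinite.2 <| by
    simpa using (p.finite_setOfPred_isRoot hp).preimage Int.cast_injective.injOn

noncomputable def evalGerm {R : Type*} [CommRing R] : R[X] →+* Germ (cofinite : Filter ℤ) R :=
  (Germ.coeRingHom cofinite).comp (RingHom.pi fun n : ℤ => Polynomial.evalRingHom (n : R))

lemma isUnit_evalGerm {p : K[X]} (hp : p ≠ 0) : IsUnit (evalGerm p) := by
  refine isUnit_iff_exists_inv.2 ⟨↑(fun n : ℤ => (p.eval (n : K))⁻¹), Germ.coe_eq.2 ?_⟩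
  filter_upwards [eventually_eval_intCast_ne_zero hp] with n hn
  exact mul_inv_cancel₀ hn

noncomputable def ratFuncToGerm : RatFunc K →+* Germ (cofinite : Filter ℤ) K :=
  IsLocalization.lift fun q : nonZeroDivisors K[X] => isUnit_evalGerm (nonZeroDivisors.ne_zero q.2)

noncomputable abbrev ratFuncAlgebraGerm : Algebra (RatFunc K) (Germ (cofinite : Filter ℤ) K) :=
  ratFuncToGerm.toAlgebra

attribute [local instance] ratFuncAlgebraGerm

lemma algebraMap_smul_coe (q : K[X]) (f : ℤ → K) :
    algebraMap K[X] (RatFunc K) q • (f : Germ (cofinite : Filter ℤ) K) =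
      ↑(fun n : ℤ => q.eval (n : K) * f n) := by
  rw [Algebra.smul_def, RingHom.algebraMap_toAlgebra, ratFuncToGerm, IsLocalization.lift_eq]
  rfl

def shiftGerm (a : ℤ → K) (k : ℕ) : Germ (cofinite : Filter ℤ) K :=
  ↑(fun n : ℤ => a (n + k))

noncomputable def shiftSpan (a : ℤ → K) : Submodule (RatFunc K) (Germ (cofinite : Filter ℤ) K) :=
  Submodule.span (RatFunc K) (Set.range (shiftGerm a))

lemma coe_recOp_add (a : ℤ → K) (Q : K[X][X]) (s : ℕ) :
    (↑(fun n : ℤ => recOp a Q (n + s)) : Germ (cofinite : Filter ℤ) K) =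
      Q.sum fun k q =>
        algebraMap K[X] (RatFunc K) (Polynomial.taylor (s : K) q) • shiftGerm a (s + k) := by
  simp only [recOp_apply, Polynomial.sum_def, shiftGerm, algebraMap_smul_coe,
    Polynomial.taylor_eval]
  rw [← Germ.coe_coeRingHom, ← map_sum]
  congr 1
  funext n
  simp only [Finset.sum_apply]
  push_cast
  ring_nf

lemma shiftGerm_mem_span_of_recOp {a : ℤ → K} {Q : K[X][X]} (hQ : Q ≠ 0) (h : recOp a Q = 0)
    (k : ℕ) : shiftGerm a k ∈ Submodule.span (RatFunc K) (shiftGerm a '' Set.Iio Q.natDegree) := by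
  induction k using Nat.strong_induction_on with
  | _ k ih =>
  obtain hk | hk := lt_or_ge k Q.natDegree
  · exact Submodule.subset_span ⟨k, hk, rfl⟩
  obtain ⟨s, rfl⟩ := Nat.exists_eq_add_of_le' hk
  set c : ℕ → RatFunc K := fun t =>
    algebraMap K[X] (RatFunc K) (Polynomial.taylor (s : K) (Q.coeff t))
  have hrec := coe_recOp_add a Q s
  rw [h, Polynomial.sum_over_range _ (by simp), Finset.sum_range_succ] at hrec
  have hc : c Q.natDegree ≠ 0 := by
    simpa [c, Polynomial.taylor_eq_zero] using hQ
  have htop : shiftGerm a (s + Q.natDegree) =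
      (c Q.natDegree)⁻¹ • -∑ t ∈ Finset.range Q.natDegree, c t • shiftGerm a (s + t) := by
    rw [eq_inv_smul_iff₀ hc, eq_neg_iff_add_eq_zero, add_comm]
    exact hrec.symm
  rw [htop]
  refine Submodule.smul_mem _ _ (Submodule.neg_mem _ (Submodule.sum_mem _ fun t ht =>
    Submodule.smul_mem _ _ (ih _ ?_)))
  simp only [Finset.mem_range] at ht
  omega

lemma IsPRecursive.fg_shiftSpan {a : ℤ → K} (ha : IsPRecursive a) : (shiftSpan a).FG := by
  obtain ⟨Q, hQ, h⟩ := ha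
  refine (Submodule.fg_span ((Set.finite_Iio Q.natDegree).image (shiftGerm a))).of_le ?_
  exact Submodule.span_le.2 (Set.range_subset_iff.2 (shiftGerm_mem_span_of_recOp hQ h))

lemma isPRecursive_of_fg_shiftSpan {a : ℤ → K} (h : (shiftSpan a).FG) : IsPRecursive a := by
  have : Module.Finite (RatFunc K) (shiftSpan a) := Module.Finite.iff_fg.2 h
  have hdep : ¬LinearIndependent (RatFunc K)
      fun k => (⟨shiftGerm a k, Submodule.subset_span ⟨k, rfl⟩⟩ : shiftSpan a) :=
    fun hli => have := hli.finite; not_finite ℕ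
  obtain ⟨s, g, hsum, k₀, hk₀, hg⟩ := not_linearIndependent_iff.1 hdep
  obtain ⟨b, hb⟩ := IsLocalization.exist_integer_multiples (nonZeroDivisors K[X]) s g
  choose! P hP using hb
  let Q : K[X][X] := ∑ k ∈ s, Polynomial.monomial k (P k)
  have hQ : Q ≠ 0 := by
    have hQk₀ : Q.coeff k₀ = P k₀ := by
      simp only [Q, Polynomial.finsetSum_coeff, Polynomial.coeff_monomial]
      exact (Finset.sum_eq_single k₀ (fun k _ hk => if_neg hk) (absurd hk₀)).trans (if_pos rfl)
    intro h0
    have := hP k₀ hk₀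
    rw [← hQk₀, h0, Polynomial.coeff_zero, map_zero, eq_comm, smul_eq_zero] at this
    exact this.elim (nonZeroDivisors.coe_ne_zero b) hg
  refine IsPRecursive.of_eventually hQ (Germ.coe_eq.1 ?_)
  have hsum : ∑ k ∈ s, g k • shiftGerm a k = 0 := by simpa using congr_arg Subtype.val hsum
  calc (↑(recOp a Q) : Germ (cofinite : Filter ℤ) K)
      = ∑ k ∈ s, algebraMap K[X] (RatFunc K) (P k) • shiftGerm a k := by
        simp only [Q, map_sum, ← Germ.coe_coeRingHom]
        refine Finset.sum_congr rfl fun k _ => ?_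
        rw [Germ.coe_coeRingHom, shiftGerm, algebraMap_smul_coe]
        exact congr_arg _ (funext fun n => recOp_monomial a k (P k) n)
    _ = algebraMap K[X] (RatFunc K) b • ∑ k ∈ s, g k • shiftGerm a k := by
        rw [Finset.smul_sum]
        exact Finset.sum_congr rfl fun k hk => by
          rw [hP k hk, Algebra.smul_def (b : K[X]), mul_smul]
    _ = ↑(0 : ℤ → K) := by rw [hsum, smul_zero, Germ.coe_zero]

lemma shiftSpan_mul_le (a b : ℤ → K) : shiftSpan (a * b) ≤ shiftSpan a * shiftSpan b :=
  Submodule.span_le.2 <| Set.range_subset_iff.2 fun k =>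
    Submodule.mul_mem_mul (Submodule.subset_span (Set.mem_range_self k))
      (Submodule.subset_span (Set.mem_range_self k))

theorem IsPRecursive.mul {a b : ℤ → K} (ha : IsPRecursive a) (hb : IsPRecursive b) :
    IsPRecursive (a * b) :=
  isPRecursive_of_fg_shiftSpan <|
    (ha.fg_shiftSpan.mul hb.fg_shiftSpan).of_le (shiftSpan_mul_le a b)

end Germ

lemma Polynomial.exists_eq_sum_smul_descPochhammer {K : Type*} [Field K] {f : K[X]} {m : ℕ}
    (hf : f.natDegree ≤ m) : ∃ α : Fin (m + 1) → K, ∑ i, α i • descPochhammer K i = f := by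
  let S : Sequence K := ⟨descPochhammer K, fun i => by
    rw [degree_eq_natDegree (monic_descPochhammer K i).ne_zero, descPochhammer_natDegree]⟩
  have hf : f ∈ Submodule.span K (S '' Set.Iic m) := by
    rw [S.span_degreeLE fun i _ => by simp [S, (monic_descPochhammer K i).leadingCoeff]]
    exact mem_degreeLE.2 (degree_le_of_natDegree_le hf)
  have hS : S '' Set.Iic m = Set.range fun i : Fin (m + 1) => descPochhammer K i := by
    ext; simp [S, Fin.exists_iff]
  rwa [hS, Submodule.mem_span_range_iff_exists_fun] at hf

namespace PowerSeries

section CommRing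

variable {R : Type*} [CommRing R]

noncomputable def intCoeff : R⟦X⟧ →ₗ[R] ℤ → R where
  toFun A n := (HahnSeries.ofPowerSeries ℤ R A).coeff n
  map_add' A B := by ext n; simp
  map_smul' c A := by ext n; simp [smul_eq_C_mul]

@[simp]
lemma intCoeff_natCast (A : R⟦X⟧) (n : ℕ) : intCoeff A n = coeff n A :=
  HahnSeries.ofPowerSeries_apply_coeff A n

lemma intCoeff_of_neg (A : R⟦X⟧) {n : ℤ} (hn : n < 0) : intCoeff A n = 0 := by
  simp [intCoeff, PowerSeries.coeff_coe, hn]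

lemma intCoeff_injective : Function.Injective (intCoeff : R⟦X⟧ → ℤ → R) :=
  fun _ _ h => HahnSeries.ofPowerSeries_injective (HahnSeries.coeff_injective h)

lemma intCoeff_monomial_mul (j : ℕ) (c : R) (A : R⟦X⟧) (n : ℤ) :
    intCoeff (monomial j c * A) n = c * intCoeff A (n - j) := by
  have hX : intCoeff (X ^ j * A) n = intCoeff A (n - j) := by
    simpa [intCoeff] using HahnSeries.coeff_single_mul_add (r := (1 : R))
      (x := HahnSeries.ofPowerSeries ℤ R A) (a := n - j) (b := (j : ℤ))
  have hm : (monomial j c : R⟦X⟧) = c • X ^ j := by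
    rw [X_pow_eq, ← LinearMap.map_smul, smul_eq_mul, mul_one]
  rw [hm, smul_mul_assoc, map_smul, Pi.smul_apply, hX, smul_eq_mul]

lemma intCoeff_derivative (A : R⟦X⟧) (n : ℤ) :
    intCoeff (d⁄dX R A) n = (n + 1) * intCoeff A (n + 1) := by
  rcases lt_or_ge n 0 with hn | hn
  · rcases (show n = -1 ∨ n + 1 < 0 by omega) with rfl | hn'
    · simp [intCoeff_of_neg _ hn]
    · simp [intCoeff_of_neg _ hn, intCoeff_of_neg _ hn']
  · lift n to ℕ using hn
    rw [intCoeff_natCast, coeff_derivative, show (n : ℤ) + 1 = (n + 1 : ℕ) by push_cast; rfl,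
      intCoeff_natCast]
    push_cast
    ring

lemma intCoeff_iterate_derivative (A : R⟦X⟧) (i : ℕ) (n : ℤ) :
    intCoeff ((d⁄dX R)^[i] A) n =
      (descPochhammer R i).eval ((n + i : ℤ) : R) * intCoeff A (n + i) := by
  induction i generalizing A with
  | zero => simp
  | succ i ih =>
    rw [Function.iterate_succ_apply, ih, intCoeff_derivative, descPochhammer_succ_left]
    simp only [Polynomial.eval_mul, Polynomial.eval_X, Polynomial.eval_comp, Polynomial.eval_sub,
      Polynomial.eval_one]
    push_cast
    ring_nf

lemma intCoeff_sum_monomial_mul_iterate_derivative {ι : Type*} (s : Finset ι) (e : ι → ℕ)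
    (c : ι → R) (i : ℕ) (A : R⟦X⟧) (n : ℤ) :
    intCoeff ((∑ k ∈ s, Polynomial.monomial (e k) (c k) : R[X]) * (d⁄dX R)^[i] A : R⟦X⟧) n =
      ∑ k ∈ s, c k * (descPochhammer R i).eval ((n - e k + i : ℤ) : R) *
        intCoeff A (n - e k + i) := by
  rw [← Polynomial.coeToPowerSeries.ringHom_apply, map_sum, Finset.sum_mul, map_sum,
    Finset.sum_apply]
  simp only [Polynomial.coeToPowerSeries.ringHom_apply, Polynomial.coe_monomial,
    intCoeff_monomial_mul, intCoeff_iterate_derivative, mul_assoc]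

lemma intCoeff_hadamardMul (A B : R⟦X⟧) :
    intCoeff (hadamardMul A B) = intCoeff A * intCoeff B := by
  ext n
  rcases lt_or_ge n 0 with hn | hn
  · simp [intCoeff_of_neg _ hn]
  · lift n to ℕ using hn
    simp [hadamardMul]

lemma iterate_derivative_coe (p : R[X]) (i : ℕ) :
    (d⁄dX R)^[i] (p : R⟦X⟧) = (Polynomial.derivative^[i] p : R[X]) := by
  induction i generalizing p with
  | zero => rfl
  | succ i ih => rw [Function.iterate_succ_apply, derivative_coe, ih, Function.iterate_succ_apply]

theorem intCoeff_sum_eq_recOp {Q : R[X][X]} {m : ℕ} {α : ℕ → Fin (m + 1) → R}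
    (hα : ∀ k ≤ Q.natDegree,
      ∑ i, α k i • descPochhammer R i = Polynomial.taylor (-(k : R)) (Q.coeff k))
    (A : R⟦X⟧) (n : ℤ) :
    intCoeff (∑ i : Fin (m + 1), ((∑ k ∈ Finset.range (Q.natDegree + 1),
        Polynomial.monomial (Q.natDegree - k + i) (α k i) : R[X]) : R⟦X⟧) * (d⁄dX R)^[i] A) n =
      recOp (intCoeff A) Q (n - Q.natDegree) := by
  simp only [map_sum, Finset.sum_apply, intCoeff_sum_monomial_mul_iterate_derivative]
  rw [Finset.sum_comm, recOp_apply, Polynomial.sum_over_range _ (by simp)]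
  refine Finset.sum_congr rfl fun k hk => ?_
  have hkr : k ≤ Q.natDegree := Finset.mem_range_succ_iff.1 hk
  have hidx (i : ℕ) : n - ((Q.natDegree - k + i : ℕ) : ℤ) + i = n - Q.natDegree + k := by
    push_cast [hkr]
    ring
  simp only [hidx, ← Finset.sum_mul]
  congr 1
  have := congr_arg (Polynomial.eval ((n - Q.natDegree + k : ℤ) : R)) (hα k hkr)
  simp only [Polynomial.eval_finsetSum, Polynomial.eval_smul, smul_eq_mul,
    Polynomial.taylor_eval] at this
  rw [this]
  push_cast
  ring_nf

end CommRing

variable {K : Type*} [Field K]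

theorem exists_sum_iterate_derivative_ne_zero [CharZero K] {m : ℕ} {p : Fin (m + 1) → K[X]}
    (hp : ∃ i, p i ≠ 0) : ∃ B : K⟦X⟧, ∑ i, (p i : K⟦X⟧) * (d⁄dX K)^[i] B ≠ 0 := by
  obtain ⟨i₀, hi₀, hmin⟩ := WellFounded.has_min wellFounded_lt {i | p i ≠ 0} hp
  refine ⟨((Polynomial.X ^ (i₀ : ℕ) : K[X]) : K⟦X⟧), ?_⟩
  have hsum : ∑ i, p i * Polynomial.derivative^[i] (Polynomial.X ^ (i₀ : ℕ)) =
      p i₀ * Polynomial.C ((i₀ : ℕ).factorial : K) := by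
    rw [Finset.sum_eq_single i₀ _ (by simp), Polynomial.iterate_derivative_X_pow_eq_C_mul,
      Nat.descFactorial_self, Nat.sub_self, pow_zero, mul_one]
    intro i _ hi
    rcases lt_or_gt_of_ne hi with h | h
    · rw [show p i = 0 by simpa using mt (hmin i) (not_not.2 h), zero_mul]
    · rw [Polynomial.iterate_derivative_eq_zero (by simpa using h), mul_zero]
  simp_rw [iterate_derivative_coe, ← Polynomial.coe_mul,
    ← Polynomial.coeToPowerSeries.ringHom_apply, ← map_sum,
    Polynomial.coeToPowerSeries.ringHom_apply, hsum]
  exact_mod_cast mul_ne_zero hi₀ (by simpa using Nat.factorial_ne_zero _)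

theorem _root_.IsDFinitePS.isPRecursive_intCoeff [CharZero K] {A : K⟦X⟧} (hA : IsDFinitePS A) :
    IsPRecursive (intCoeff A) := by
  obtain ⟨m, p, hp, hA⟩ := hA
  set J := Finset.univ.sup fun i => (p i).natDegree
  let Q : K[X][X] := ∑ i : Fin (m + 1), ∑ j ∈ Finset.range (J + 1),
    Polynomial.monomial (J - j + i)
      (Polynomial.C ((p i).coeff j) * Polynomial.taylor ((J - j + i : ℕ) : K) (descPochhammer K i))
  have hQ (B : K⟦X⟧) (n : ℤ) :
      recOp (intCoeff B) Q n = intCoeff (∑ i, (p i : K⟦X⟧) * (d⁄dX K)^[i] B) (n + J) := by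
    simp only [Q, map_sum, Finset.sum_apply, recOp_monomial]
    refine Finset.sum_congr rfl fun i _ => ?_
    conv_rhs => rw [(p i).as_sum_range' (J + 1)
      (Nat.lt_succ_of_le (Finset.le_sup (f := fun i => (p i).natDegree) (Finset.mem_univ i))),
      intCoeff_sum_monomial_mul_iterate_derivative]
    refine Finset.sum_congr rfl fun j hj => ?_
    have hjJ : j ≤ J := Nat.lt_succ_iff.mp (Finset.mem_range.mp hj)
    simp only [Polynomial.eval_mul, Polynomial.eval_C, Polynomial.taylor_eval]
    push_cast [hjJ]
    ring_nf
  refine ⟨Q, fun hQ0 => ?_, ?_⟩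
  · -- `hQ` holds for every `B`, so `Q = 0` would make the differential operator kill all of `K⟦X⟧`.
    obtain ⟨B, hB⟩ := exists_sum_iterate_derivative_ne_zero hp
    refine hB (intCoeff_injective (funext fun n => ?_))
    simpa [hQ0] using (hQ B (n - J)).symm
  · funext n
    simp [hQ, hA]

theorem isDFinitePS_of_isPRecursive_intCoeff {A : K⟦X⟧} (h : IsPRecursive (intCoeff A)) :
    IsDFinitePS A := by
  obtain ⟨Q, hQ, hrec⟩ := h
  set r := Q.natDegree
  set m := (Finset.range (r + 1)).sup fun k => (Q.coeff k).natDegree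
  have hexp (k : ℕ) (hk : k ≤ r) : ∃ α : Fin (m + 1) → K,
      ∑ i, α i • descPochhammer K i = Polynomial.taylor (-(k : K)) (Q.coeff k) :=
    Polynomial.exists_eq_sum_smul_descPochhammer <| by
      rw [Polynomial.natDegree_taylor]
      exact Finset.le_sup (f := fun k => (Q.coeff k).natDegree) (Finset.mem_range_succ_iff.2 hk)
  choose! α hα using hexp
  refine ⟨m, fun i => ∑ k ∈ Finset.range (r + 1), Polynomial.monomial (r - k + i) (α k i), ?_,
    intCoeff_injective (funext fun n => ?_)⟩
  · obtain ⟨i, hi⟩ : ∃ i, α r i ≠ 0 := by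
      by_contra! h0
      have := (hα r le_rfl).symm
      simp only [h0, zero_smul, Finset.sum_const_zero, Polynomial.taylor_eq_zero] at this
      exact Polynomial.leadingCoeff_ne_zero.2 hQ this
    refine ⟨i, fun hpi => hi ?_⟩
    have := congr_arg (Polynomial.coeff · (i : ℕ)) hpi
    simp only [Polynomial.finsetSum_coeff, Polynomial.coeff_monomial] at this
    rwa [Finset.sum_eq_single r (fun k hk hkr => if_neg (by simp at hk; omega)) (by simp),
      if_pos (by simp)] at this
  · rw [intCoeff_sum_eq_recOp hα, hrec]
    simp

theorem isPRecursive_intCoeff_iff [CharZero K] {A : K⟦X⟧} :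
    IsPRecursive (intCoeff A) ↔ IsDFinitePS A :=
  ⟨isDFinitePS_of_isPRecursive_intCoeff, IsDFinitePS.isPRecursive_intCoeff⟩

end PowerSeries

/-- Over a field of characteristic zero, the Hadamard product of two D-finite power
series is D-finite. -/
theorem isDFinite_hadamardMul {K : Type*} [Field K] [CharZero K]
    (A B : PowerSeries K) (hA : IsDFinitePS A) (hB : IsDFinitePS B) :
    IsDFinitePS (hadamardMul A B) := by
  rw [← isPRecursive_intCoeff_iff] at hA hB ⊢
  rw [intCoeff_hadamardMul]
  exact hA.mul hB
end

section
/- (Jungen) Let A, B ∈ ℂ⟦z⟧ be formal power series. If A is rational and B is algebraic over ℂ(z), then the Hadamard product A * B is algebraic over ℂ(z). -/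
open PowerSeries

/-!
Over an algebraically closed field of characteristic zero, partial fractions write a rational
series as a polynomial plus a linear combination of the series `(1 - aX)⁻¹ ^ (k + 1)`, whose
`n`-th coefficient is `(k + n choose k) aⁿ`. The Hadamard product with a polynomial is a
polynomial, and the Hadamard product of `(1 - aX)⁻¹ ^ (k + 1)` with `B` is obtained from
`B(aX)` by applying `k` times operators of the form `F ↦ (X F' + (j + 1) F) / (j + 1)`.
So it suffices that algebraic series form a `K[X]`-algebra stable under `F ↦ F(aX)` and
under differentiation.
-/

open scoped Polynomial

section Algebraic

variable {K : Type*}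

theorem PowerSeries.algebraMap_polynomial_eq [CommRing K] :
    algebraMap K[X] K⟦X⟧ = Polynomial.coeToPowerSeries.ringHom :=
  RingHom.ext fun p => by
    rw [algebraMap_apply', Algebra.algebraMap_self, map_id, id_eq,
      Polynomial.coeToPowerSeries.ringHom_apply]

theorem isAlgebraicPS_iff_isAlgebraic [CommRing K] {f : K⟦X⟧} :
    IsAlgebraicPS f ↔ IsAlgebraic K[X] f := by
  simp only [IsAlgebraicPS, IsAlgebraic, Polynomial.aeval_def, algebraMap_polynomial_eq]

variable [Field K] {f : K⟦X⟧}

theorem PowerSeries.isAlgebraic_coe (p : K[X]) : IsAlgebraic K[X] (p : K⟦X⟧) := by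
  simpa [algebraMap_polynomial_eq] using isAlgebraic_algebraMap (A := K⟦X⟧) p

theorem IsAlgebraic.smul_const (hf : IsAlgebraic K[X] f) (c : K) : IsAlgebraic K[X] (c • f) :=
  algebraMap_smul K[X] c f ▸ hf.smul _

noncomputable def Polynomial.rescale (a : K) : K[X] →ₐ[K] K[X] :=
  Polynomial.aeval (Polynomial.C a * Polynomial.X)

theorem Polynomial.coe_rescale (a : K) (p : K[X]) :
    ((Polynomial.rescale a p : K[X]) : K⟦X⟧) = PowerSeries.rescale a (p : K⟦X⟧) := by
  induction p using Polynomial.induction_on' with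
  | add p q hp hq => simp only [map_add, Polynomial.coe_add, hp, hq]
  | monomial n c =>
    have hC : PowerSeries.rescale a (PowerSeries.C c) = PowerSeries.C c := by
      ext (_ | m) <;> simp [coeff_rescale, PowerSeries.coeff_C]
    simp [Polynomial.rescale, ← Polynomial.C_mul_X_pow_eq_monomial, mul_pow, rescale_X, hC]

theorem IsAlgebraic.rescale (hf : IsAlgebraic K[X] f) (a : K) :
    IsAlgebraic K[X] (rescale a f) := by
  rcases eq_or_ne a 0 with rfl | ha
  · rw [rescale_zero_apply, ← Polynomial.coe_C]
    exact isAlgebraic_coe _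
  obtain ⟨P, hP0, hP⟩ := hf
  have hinj : Function.Injective (Polynomial.rescale a) := fun p q hpq => by
    apply Polynomial.coe_injective K
    apply rescale_injective ha
    rw [← Polynomial.coe_rescale, ← Polynomial.coe_rescale, hpq]
  have hcomm : (algebraMap K[X] K⟦X⟧).comp (Polynomial.rescale a).toRingHom =
      (PowerSeries.rescale a).comp (algebraMap K[X] K⟦X⟧) :=
    RingHom.ext fun p => by simp [algebraMap_polynomial_eq, Polynomial.coe_rescale]
  refine ⟨P.map (Polynomial.rescale a).toRingHom, (Polynomial.map_ne_zero_iff hinj).2 hP0, ?_⟩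
  rw [Polynomial.aeval_def, Polynomial.eval₂_map, hcomm, ← Polynomial.hom_eval₂,
    ← Polynomial.aeval_def, hP, map_zero]

theorem PowerSeries.derivative_aeval_sub_mem_adjoin (f : K⟦X⟧) (P : K[X][X]) :
    d⁄dX K (Polynomial.aeval f P) - Polynomial.aeval f (Polynomial.derivative P) * d⁄dX K f ∈
      Algebra.adjoin K[X] {f} := by
  induction P using Polynomial.induction_on' with
  | add P Q hP hQ => simpa only [map_add, add_mul, add_sub_add_comm] using add_mem hP hQ
  | monomial n c =>
    have hc : d⁄dX K (algebraMap K[X] K⟦X⟧ c) =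
        algebraMap K[X] K⟦X⟧ (Polynomial.derivative c) := by
      simp [algebraMap_polynomial_eq, derivative_coe]
    have key : d⁄dX K (Polynomial.aeval f (Polynomial.monomial n c)) -
        Polynomial.aeval f (Polynomial.derivative (Polynomial.monomial n c)) * d⁄dX K f =
        algebraMap K[X] K⟦X⟧ (Polynomial.derivative c) * f ^ n := by
      rw [Polynomial.aeval_monomial, Polynomial.derivative_monomial, Polynomial.aeval_monomial,
        Derivation.leibniz, Derivation.leibniz_pow, hc, smul_eq_mul, smul_eq_mul, nsmul_eq_mul,
        map_mul, map_natCast]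
      ring
    rw [key]
    exact Subalgebra.mul_mem _ (Subalgebra.algebraMap_mem _ _)
      (Subalgebra.pow_mem _ (Algebra.self_mem_adjoin_singleton _ _) _)

theorem IsAlgebraic.derivative [CharZero K] (hf : IsAlgebraic K[X] f) :
    IsAlgebraic K[X] (d⁄dX K f) := by
  have hle : Algebra.adjoin K[X] {f} ≤ Subalgebra.algebraicClosure K[X] K⟦X⟧ :=
    Algebra.adjoin_le (Set.singleton_subset_iff.2 hf)
  obtain ⟨P, hP0, hP⟩ := hf
  induction hn : P.natDegree using Nat.strong_induction_on generalizing P with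
  | _ n ih =>
    have hdeg : P.natDegree ≠ 0 := by
      intro h0
      rw [Polynomial.eq_C_of_natDegree_eq_zero h0, Polynomial.aeval_C, algebraMap_polynomial_eq,
        Polynomial.coeToPowerSeries.ringHom_apply, Polynomial.coe_eq_zero_iff] at hP
      exact hP0 (by rw [Polynomial.eq_C_of_natDegree_eq_zero h0, hP, map_zero])
    by_cases hP' : Polynomial.aeval f (Polynomial.derivative P) = 0
    · exact ih _ (hn ▸ Polynomial.natDegree_derivative_lt hdeg) _
        (mt Polynomial.derivative_eq_zero.1 hdeg) hP' rfl
    -- Differentiating `P(f) = 0` gives `P'(f) f' ∈ K[X][f]`, and `P'(f) ≠ 0` is algebraic.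
    have hmem := derivative_aeval_sub_mem_adjoin f P
    rw [hP, map_zero, zero_sub] at hmem
    refine IsAlgebraic.of_mul (mem_nonZeroDivisors_of_ne_zero hP')
      (hle (Polynomial.aeval_mem_adjoin_singleton _ _)) ?_
    simpa using (hle hmem).neg

end Algebraic

section Hadamard

variable {K : Type*} [CommRing K]

@[simp]
theorem coeff_hadamardMul (A B : K⟦X⟧) (n : ℕ) :
    coeff n (hadamardMul A B) = coeff n A * coeff n B :=
  coeff_mk _ _

theorem hadamardMul_add_left (A₁ A₂ B : K⟦X⟧) :
    hadamardMul (A₁ + A₂) B = hadamardMul A₁ B + hadamardMul A₂ B := by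
  ext n
  simp [add_mul]

theorem hadamardMul_smul_left (c : K) (A B : K⟦X⟧) :
    hadamardMul (c • A) B = c • hadamardMul A B := by
  ext n
  simp [mul_assoc]

theorem hadamardMul_rescale_left (a : K) (A B : K⟦X⟧) :
    hadamardMul (rescale a A) B = hadamardMul A (rescale a B) := by
  ext n
  simp only [coeff_hadamardMul, coeff_rescale]
  ring

theorem coeff_X_mul_derivative (F : K⟦X⟧) (n : ℕ) :
    coeff n (X * d⁄dX K F) = n * coeff n F := by
  rcases n with _ | n
  · simp
  · rw [coeff_succ_X_mul, coeff_derivative]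
    push_cast
    ring

theorem hadamardMul_mk_choose_succ (k : ℕ) (B : K⟦X⟧) :
    ((k : K) + 1) • hadamardMul (mk fun n => ((k + 1 + n).choose (k + 1) : K)) B =
      X * d⁄dX K (hadamardMul (mk fun n => ((k + n).choose k : K)) B) +
        ((k : K) + 1) • hadamardMul (mk fun n => ((k + n).choose k : K)) B := by
  ext n
  have h := Nat.add_one_mul_choose_eq (k + n) k
  rw [show k + n + 1 = k + 1 + n by ring] at h
  simp only [map_add, coeff_smul, coeff_X_mul_derivative, coeff_hadamardMul, coeff_mk,
    smul_eq_mul]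
  have h' := congrArg (Nat.cast : ℕ → K) h
  push_cast at h'
  linear_combination (coeff n B) * h'.symm

end Hadamard

section Multipliers

variable (K : Type*) [Field K]

def hadamardMultipliers : Submodule K K⟦X⟧ where
  carrier := {A | ∀ B, IsAlgebraic K[X] B → IsAlgebraic K[X] (hadamardMul A B)}
  zero_mem' B _ := by
    rw [show hadamardMul 0 B = 0 by ext; simp]
    exact isAlgebraic_zero
  add_mem' {A₁ A₂} h₁ h₂ B hB := by
    rw [hadamardMul_add_left]
    exact (h₁ B hB).add (h₂ B hB)
  smul_mem' c A h B hB := by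
    rw [hadamardMul_smul_left]
    exact (h B hB).smul_const c

variable {K}

theorem coe_mem_hadamardMultipliers (p : K[X]) : (p : K⟦X⟧) ∈ hadamardMultipliers K := by
  intro B _
  have : hadamardMul (p : K⟦X⟧) B = (trunc (p.natDegree + 1) (hadamardMul p B) : K⟦X⟧) := by
    ext n
    simp only [Polynomial.coeff_coe, coeff_trunc, coeff_hadamardMul]
    split_ifs with hn
    · rfl
    · rw [Polynomial.coeff_eq_zero_of_natDegree_lt (by omega), zero_mul]
  rw [this]
  exact isAlgebraic_coe _

theorem rescale_mem_hadamardMultipliers (a : K) {A : K⟦X⟧} (hA : A ∈ hadamardMultipliers K) :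
    rescale a A ∈ hadamardMultipliers K := fun B hB => by
  rw [hadamardMul_rescale_left]
  exact hA _ (hB.rescale a)

theorem mk_choose_mem_hadamardMultipliers [CharZero K] (k : ℕ) :
    (mk fun n => ((k + n).choose k : K)) ∈ hadamardMultipliers K := by
  induction k with
  | zero =>
    intro B hB
    convert hB
    ext n
    simp
  | succ k ih =>
    intro B hB
    have hk : (k : K) + 1 ≠ 0 := Nat.cast_add_one_ne_zero k
    have h := hadamardMul_mk_choose_succ k B
    rw [← eq_inv_smul_iff₀ hk] at h
    rw [h]
    have hF := ih B hB
    rw [← Polynomial.coe_X]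
    exact (((isAlgebraic_coe (K := K) Polynomial.X).mul hF.derivative).add
      (hF.smul_const _)).smul_const _

end Multipliers

section PartialFractions

variable {K : Type*} [Field K]

noncomputable def geom (a : K) : K⟦X⟧ :=
  rescale a (mk 1)

theorem one_sub_C_mul_X_mul_geom (a : K) : (1 - C a * X) * geom a = 1 := by
  rw [geom, ← rescale_X, ← map_one (rescale a), ← map_sub, ← map_mul, mul_comm,
    mk_one_mul_one_sub_eq_one, map_one]

theorem geom_zero : geom (0 : K) = 1 := by
  simpa using one_sub_C_mul_X_mul_geom (0 : K)

theorem geom_pow_succ (a : K) (k : ℕ) :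
    geom a ^ (k + 1) = rescale a (mk fun n => ((k + n).choose k : K)) := by
  rw [geom, ← map_pow, mk_one_pow_eq_mk_choose_add]

theorem coe_X_sub_C_mul_geom_inv {a : K} (ha : a ≠ 0) :
    ((Polynomial.X - Polynomial.C a : K[X]) : K⟦X⟧) * geom a⁻¹ = C (-a) := by
  have hX : ((Polynomial.X - Polynomial.C a : K[X]) : K⟦X⟧) = C (-a) * (1 - C a⁻¹ * X) := by
    rw [mul_sub, mul_one, ← mul_assoc, ← map_mul, neg_mul, mul_inv_cancel₀ ha]
    simp only [Polynomial.coe_sub, Polynomial.coe_X, Polynomial.coe_C, map_neg, map_one]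
    ring
  rw [hX, mul_assoc, one_sub_C_mul_X_mul_geom, mul_one]

variable (K) in
def partialFractionSpan : Submodule K K⟦X⟧ :=
  Submodule.span K (Set.range (fun p : K[X] => (p : K⟦X⟧)) ∪
    Set.range fun ak : K × ℕ => geom ak.1 ^ (ak.2 + 1))

theorem coe_mem_partialFractionSpan (p : K[X]) : (p : K⟦X⟧) ∈ partialFractionSpan K :=
  Submodule.subset_span (Or.inl ⟨p, rfl⟩)

theorem geom_pow_mem_partialFractionSpan (a : K) (k : ℕ) :
    geom a ^ (k + 1) ∈ partialFractionSpan K :=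
  Submodule.subset_span (Or.inr ⟨(a, k), rfl⟩)

theorem partialFractionSpan_le_hadamardMultipliers [CharZero K] :
    partialFractionSpan K ≤ hadamardMultipliers K := by
  refine Submodule.span_le.2 ?_
  rintro _ (⟨p, rfl⟩ | ⟨⟨a, k⟩, rfl⟩)
  · exact coe_mem_hadamardMultipliers p
  · change geom a ^ (k + 1) ∈ hadamardMultipliers K
    rw [geom_pow_succ]
    exact rescale_mem_hadamardMultipliers a (mk_choose_mem_hadamardMultipliers k)

theorem coe_mul_geom_mem_partialFractionSpan (p : K[X]) (b : K) :
    (p : K⟦X⟧) * geom b ∈ partialFractionSpan K := by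
  rcases eq_or_ne b 0 with rfl | hb
  · rw [geom_zero, mul_one]
    exact coe_mem_partialFractionSpan p
  set q := p /ₘ (Polynomial.X - Polynomial.C b⁻¹)
  have hp : (p : K⟦X⟧) * geom b = p.eval b⁻¹ • geom b + (-b⁻¹) • (q : K⟦X⟧) := by
    have h := coe_X_sub_C_mul_geom_inv (inv_ne_zero hb)
    rw [inv_inv] at h
    conv_lhs => rw [← Polynomial.modByMonic_add_div p (Polynomial.X - Polynomial.C b⁻¹),
      Polynomial.modByMonic_X_sub_C_eq_C_eval]
    rw [Polynomial.coe_add, Polynomial.coe_mul, Polynomial.coe_C, smul_eq_C_mul, smul_eq_C_mul,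
      ← h]
    ring
  rw [hp]
  exact add_mem (Submodule.smul_mem _ _ (by simpa using geom_pow_mem_partialFractionSpan b 0))
    (Submodule.smul_mem _ _ (coe_mem_partialFractionSpan q))

theorem geom_pow_mul_geom_mem_partialFractionSpan (a b : K) (k : ℕ) :
    geom a ^ k * geom b ∈ partialFractionSpan K := by
  induction k with
  | zero => simpa using geom_pow_mem_partialFractionSpan b 0
  | succ k ih =>
    rcases eq_or_ne a b with rfl | hab
    · rw [← pow_succ]
      exact geom_pow_mem_partialFractionSpan a (k + 1)
    -- `b (1 - aX) - a (1 - bX) = b - a`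
    have key : C (b - a) * (geom a ^ (k + 1) * geom b) =
        C b * (geom a ^ k * geom b) - C a * geom a ^ (k + 1) := by
      rw [map_sub]
      linear_combination (C b * geom a ^ k * geom b) * one_sub_C_mul_X_mul_geom a -
        (C a * geom a ^ (k + 1)) * one_sub_C_mul_X_mul_geom b
    have hba : b - a ≠ 0 := sub_ne_zero.2 hab.symm
    rw [← smul_eq_C_mul, ← smul_eq_C_mul, ← smul_eq_C_mul, ← eq_inv_smul_iff₀ hba] at key
    rw [key]
    exact Submodule.smul_mem _ _ (sub_mem (Submodule.smul_mem _ _ ih)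
      (Submodule.smul_mem _ _ (geom_pow_mem_partialFractionSpan a k)))

theorem mul_geom_mem_partialFractionSpan {F : K⟦X⟧} (hF : F ∈ partialFractionSpan K) (b : K) :
    F * geom b ∈ partialFractionSpan K := by
  induction hF using Submodule.span_induction with
  | mem F hF =>
    rcases hF with ⟨p, rfl⟩ | ⟨⟨a, k⟩, rfl⟩
    · exact coe_mul_geom_mem_partialFractionSpan p b
    · exact geom_pow_mul_geom_mem_partialFractionSpan a b (k + 1)
  | zero => simp
  | add F G _ _ hF hG => simpa only [add_mul] using add_mem hF hG
  | smul c F _ hF => simpa only [smul_mul_assoc] using Submodule.smul_mem _ c hF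

theorem mem_partialFractionSpan_of_coe_mul_mem [IsAlgClosed K] {Q : K[X]}
    (hQ : Q.coeff 0 ≠ 0) {A : K⟦X⟧} (hQA : (Q : K⟦X⟧) * A ∈ partialFractionSpan K) :
    A ∈ partialFractionSpan K := by
  induction hn : Q.natDegree generalizing Q with
  | zero =>
    rw [Polynomial.eq_C_of_natDegree_eq_zero hn, Polynomial.coe_C, ← smul_eq_C_mul] at hQA
    simpa [hQ] using Submodule.smul_mem _ (Q.coeff 0)⁻¹ hQA
  | succ n ih =>
    obtain ⟨β, hβ⟩ := IsAlgClosed.exists_root Q (by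
      rw [Polynomial.degree_eq_natDegree (by rintro rfl; simp at hQ), hn]
      exact_mod_cast n.succ_ne_zero)
    set Q' := Q /ₘ (Polynomial.X - Polynomial.C β)
    have hQ' : (Polynomial.X - Polynomial.C β) * Q' = Q :=
      Polynomial.mul_divByMonic_eq_iff_isRoot.2 hβ
    have hcoeff : Q.coeff 0 = -β * Q'.coeff 0 := by
      rw [← hQ', Polynomial.mul_coeff_zero]
      simp
    have hβ0 : β ≠ 0 := by rintro rfl; simp [hcoeff] at hQ
    refine ih (Q := Q') (by rintro h; simp [hcoeff, h] at hQ) ?_ ?_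
    · have h : (-β) • ((Q' : K⟦X⟧) * A) ∈ partialFractionSpan K := by
        convert mul_geom_mem_partialFractionSpan hQA β⁻¹ using 1
        rw [← hQ', Polynomial.coe_mul, smul_eq_C_mul, ← coe_X_sub_C_mul_geom_inv hβ0]
        ring
      simpa [hβ0] using Submodule.smul_mem _ (-β)⁻¹ h
    · rw [Polynomial.natDegree_divByMonic _ (Polynomial.monic_X_sub_C β), hn,
        Polynomial.natDegree_X_sub_C, Nat.add_sub_cancel]

theorem IsRationalPS.mem_partialFractionSpan [IsAlgClosed K] {A : K⟦X⟧} (hA : IsRationalPS A) :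
    A ∈ partialFractionSpan K := by
  obtain ⟨P, Q, hQ, hQA⟩ := hA
  exact mem_partialFractionSpan_of_coe_mul_mem hQ (hQA ▸ coe_mem_partialFractionSpan P)

end PartialFractions

/-- (Jungen) The Hadamard product of a rational power series and an algebraic power
series over `ℂ` is algebraic over `ℂ(z)`. -/
theorem isAlgebraicPS_hadamardMul_of_rational (A B : PowerSeries ℂ)
    (hA : IsRationalPS A) (hB : IsAlgebraicPS B) :
    IsAlgebraicPS (hadamardMul A B) := by
  rw [isAlgebraicPS_iff_isAlgebraic] at hB ⊢
  exact partialFractionSpan_le_hadamardMultipliers hA.mem_partialFractionSpan B hB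
end

section
/- Let F = Σ aₙ zⁿ ∈ ℂ⟦z⟧ be a formal power series that is algebraic over ℂ(z). Then F has positive radius of convergence: there exists a real constant C > 0 such that |aₙ| ≤ C^{n+1} for all n ≥ 0. -/
open PowerSeries

/-!
Choose `P ∈ K[z][y]` with `P(F) = 0` and `P'(F) ≠ 0`, which is possible in characteristic zero,
and let `r` be the order of `P'(F)`. After replacing `F` by `F` minus its truncation at
degree `r`, the Taylor expansion of `P` at the truncation `F_{<n}` of `F`, read at `z^(n+r)`,
expresses `[z^r] P'(F) · aₙ` as `-[z^(n+r)] P(F_{<n})`, a polynomial in earlier coefficients.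
By induction `‖aₙ‖ ≤ ε Mⁿ / (n+1)²`: these weights are closed under convolution up to a
factor `8`, the part of `P(F_{<n})` linear in `F_{<n}` only sees `a_k` with `k < n` and so
gains a factor `1/M`, and the nonlinear part gains a factor `ε M^r`, which is made small.
-/

open scoped Polynomial PowerSeries
open Finset

local notation "ι" => Polynomial.coeToPowerSeries.ringHom

theorem sum_range_inv_succ_sq_le_two (s : ℕ) :
    ∑ i ∈ range s, 1 / ((i : ℝ) + 1) ^ 2 ≤ 2 := by
  have h := sum_Ioo_inv_sq_le (α := ℝ) 0 (s + 1)
  rw [← Finset.Ico_succ_left_eq_Ioo, Order.succ_eq_add_one, sum_Ico_eq_sum_range] at h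
  simpa [add_comm, one_div] using h

theorem sum_antidiagonal_inv_sq_mul_inv_sq_le (s : ℕ) :
    ∑ p ∈ antidiagonal s, 1 / (((p.1 : ℝ) + 1) ^ 2 * ((p.2 : ℝ) + 1) ^ 2) ≤
      8 / ((s : ℝ) + 1) ^ 2 := by
  have pointwise : ∀ p ∈ antidiagonal s, 1 / (((p.1 : ℝ) + 1) ^ 2 * ((p.2 : ℝ) + 1) ^ 2) ≤
      2 / ((s : ℝ) + 1) ^ 2 * (1 / ((p.1 : ℝ) + 1) ^ 2 + 1 / ((p.2 : ℝ) + 1) ^ 2) := by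
    rintro ⟨u, v⟩ huv
    have hs : (s : ℝ) = u + v := by exact_mod_cast (mem_antidiagonal.mp huv).symm
    have hsq : ((s : ℝ) + 1) ^ 2 ≤ 2 * (((u : ℝ) + 1) ^ 2 + ((v : ℝ) + 1) ^ 2) := by
      rw [hs]; nlinarith [sq_nonneg ((u : ℝ) - v)]
    calc 1 / (((u : ℝ) + 1) ^ 2 * ((v : ℝ) + 1) ^ 2)
        = 1 / (((u : ℝ) + 1) ^ 2 + ((v : ℝ) + 1) ^ 2) *
            (1 / ((u : ℝ) + 1) ^ 2 + 1 / ((v : ℝ) + 1) ^ 2) := by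
          field_simp; ring
      _ ≤ _ := by
          gcongr ?_ * _
          rw [div_le_div_iff₀ (by positivity) (by positivity)]
          linarith
  have half : ∑ p ∈ antidiagonal s, 1 / ((p.1 : ℝ) + 1) ^ 2 ≤ 2 := by
    rw [Nat.sum_antidiagonal_eq_sum_range_succ_mk]
    exact sum_range_inv_succ_sq_le_two _
  calc _ ≤ ∑ p ∈ antidiagonal s,
        2 / ((s : ℝ) + 1) ^ 2 * (1 / ((p.1 : ℝ) + 1) ^ 2 + 1 / ((p.2 : ℝ) + 1) ^ 2) :=
        sum_le_sum pointwise
    _ = 2 / ((s : ℝ) + 1) ^ 2 * (2 * ∑ p ∈ antidiagonal s, 1 / ((p.1 : ℝ) + 1) ^ 2) := by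
        rw [← mul_sum, sum_add_distrib,
          ← Nat.sum_antidiagonal_swap (f := fun p => 1 / ((p.1 : ℝ) + 1) ^ 2)]
        simp only [Prod.fst_swap]
        ring
    _ ≤ 2 / ((s : ℝ) + 1) ^ 2 * (2 * 2) := by gcongr
    _ = 8 / ((s : ℝ) + 1) ^ 2 := by ring

noncomputable def geomWeight (M : ℝ) (k : ℕ) : ℝ := M ^ k / ((k : ℝ) + 1) ^ 2

section geomWeight

variable {M : ℝ}

@[simp]
theorem geomWeight_zero : geomWeight M 0 = 1 := by simp [geomWeight]

theorem geomWeight_nonneg (hM : 0 ≤ M) (k : ℕ) : 0 ≤ geomWeight M k := by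
  unfold geomWeight; positivity

theorem geomWeight_le_pow (hM : 0 ≤ M) (k : ℕ) : geomWeight M k ≤ M ^ k :=
  div_le_self (by positivity) (one_le_pow₀ (by linarith [k.cast_nonneg (α := ℝ)]))

theorem sum_antidiagonal_geomWeight_mul_le (hM : 0 ≤ M) (s : ℕ) :
    ∑ p ∈ antidiagonal s, geomWeight M p.1 * geomWeight M p.2 ≤ 8 * geomWeight M s := by
  have split : ∀ p ∈ antidiagonal s, geomWeight M p.1 * geomWeight M p.2 =
      M ^ s * (1 / (((p.1 : ℝ) + 1) ^ 2 * ((p.2 : ℝ) + 1) ^ 2)) := by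
    rintro ⟨u, v⟩ huv
    rw [← mem_antidiagonal.mp huv, geomWeight, geomWeight, pow_add]
    field_simp
  rw [sum_congr rfl split, ← mul_sum, geomWeight, mul_div_left_comm]
  gcongr
  exact sum_antidiagonal_inv_sq_mul_inv_sq_le s

theorem geomWeight_le_of_add_eq (hM : 0 ≤ M) {m s N d : ℕ} (h : m + s = N) (hm : m ≤ d) :
    geomWeight M s ≤ ((d : ℝ) + 1) ^ 2 * M ^ s / ((N : ℝ) + 1) ^ 2 := by
  have hN : (N : ℝ) + 1 ≤ ((d : ℝ) + 1) * ((s : ℝ) + 1) := by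
    have : (m : ℝ) ≤ d := by exact_mod_cast hm
    rw [← h]; push_cast; nlinarith [s.cast_nonneg (α := ℝ)]
  have hN2 : ((N : ℝ) + 1) ^ 2 ≤ ((d : ℝ) + 1) ^ 2 * ((s : ℝ) + 1) ^ 2 := by
    rw [← mul_pow]; gcongr
  rw [geomWeight, div_le_div_iff₀ (by positivity) (by positivity)]
  nlinarith [pow_nonneg hM s]

theorem pow_div_sq_le_geomWeight_div (hM : 1 ≤ M) {s n N : ℕ} (hs : s < n) (hn : n ≤ N) :
    M ^ s / ((N : ℝ) + 1) ^ 2 ≤ geomWeight M n / M := by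
  have hM0 : 0 < M := by linarith
  calc M ^ s / ((N : ℝ) + 1) ^ 2 = M ^ (s + 1) / (((N : ℝ) + 1) ^ 2 * M) := by
        field_simp; ring
    _ ≤ M ^ n / (((n : ℝ) + 1) ^ 2 * M) := by
        gcongr
        exact hs
    _ = geomWeight M n / M := by rw [geomWeight, div_div]

theorem geomWeight_add_le (hM : 1 ≤ M) (n r : ℕ) :
    geomWeight M (n + r) ≤ M ^ r * geomWeight M n := by
  rw [geomWeight, geomWeight, mul_div_assoc', pow_add, mul_comm (M ^ n)]
  gcongr
  linarith

end geomWeight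

section NormedRing

variable {R : Type*} [NormedRing R] {M : ℝ}

theorem norm_coeff_mul_le_of_le_geomWeight (hM : 0 ≤ M) {f g : R⟦X⟧} {α β : ℝ}
    (hf : ∀ k, ‖coeff k f‖ ≤ α * geomWeight M k)
    (hg : ∀ k, ‖coeff k g‖ ≤ β * geomWeight M k) (k : ℕ) :
    ‖coeff k (f * g)‖ ≤ 8 * α * β * geomWeight M k := by
  have hαβ : 0 ≤ α * β := by
    have hα := (norm_nonneg _).trans (hf 0)
    have hβ := (norm_nonneg _).trans (hg 0)
    simp only [geomWeight_zero, mul_one] at hα hβ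
    positivity
  rw [PowerSeries.coeff_mul]
  calc _ ≤ ∑ p ∈ antidiagonal k, ‖coeff p.1 f‖ * ‖coeff p.2 g‖ :=
        (norm_sum_le _ _).trans (sum_le_sum fun _ _ => norm_mul_le _ _)
    _ ≤ ∑ p ∈ antidiagonal k, (α * geomWeight M p.1) * (β * geomWeight M p.2) :=
        sum_le_sum fun _ _ =>
          mul_le_mul (hf _) (hg _) (norm_nonneg _) ((norm_nonneg _).trans (hf _))
    _ = α * β * ∑ p ∈ antidiagonal k, geomWeight M p.1 * geomWeight M p.2 := by
        rw [mul_sum]; exact sum_congr rfl fun _ _ => by ring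
    _ ≤ α * β * (8 * geomWeight M k) := by
        gcongr; exact sum_antidiagonal_geomWeight_mul_le hM k
    _ = 8 * α * β * geomWeight M k := by ring

theorem norm_coeff_pow_succ_le_of_le_geomWeight (hM : 0 ≤ M) {f : R⟦X⟧} {α : ℝ}
    (hf : ∀ k, ‖coeff k f‖ ≤ α * geomWeight M k) (j k : ℕ) :
    ‖coeff k (f ^ (j + 1))‖ ≤ (8 * α) ^ j * α * geomWeight M k := by
  induction j generalizing k with
  | zero => simpa using hf k
  | succ j ih =>
    rw [pow_succ]
    calc _ ≤ 8 * ((8 * α) ^ j * α) * α * geomWeight M k :=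
          norm_coeff_mul_le_of_le_geomWeight hM ih hf k
      _ = (8 * α) ^ (j + 1) * α * geomWeight M k := by ring

noncomputable def l1Norm (c : R[X]) : ℝ := c.sum fun _ a => ‖a‖

theorem l1Norm_nonneg (c : R[X]) : 0 ≤ l1Norm c :=
  sum_nonneg fun _ _ => norm_nonneg _

theorem norm_coeff_le_l1Norm (c : R[X]) (m : ℕ) : ‖c.coeff m‖ ≤ l1Norm c := by
  by_cases hm : m ∈ c.support
  · exact single_le_sum (f := fun i => ‖c.coeff i‖) (fun _ _ => norm_nonneg _) hm
  · rw [Polynomial.notMem_support_iff.mp hm, norm_zero]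
    exact l1Norm_nonneg c

theorem norm_coeff_coe_mul_le (c : R[X]) (Y : R⟦X⟧) (N : ℕ) {B : ℝ} (hB₀ : 0 ≤ B)
    (hB : ∀ m ∈ c.support, m ≤ N → ‖coeff (N - m) Y‖ ≤ B) :
    ‖coeff N ((c : R⟦X⟧) * Y)‖ ≤ l1Norm c * B := by
  have termwise : ∀ p ∈ antidiagonal N,
      ‖c.coeff p.1 * coeff p.2 Y‖ ≤ ‖c.coeff p.1‖ * B := by
    rintro ⟨m, s⟩ hms
    obtain rfl : s = N - m := by rw [← mem_antidiagonal.mp hms]; simp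
    by_cases hm : m ∈ c.support
    · exact (norm_mul_le _ _).trans (by gcongr; exact hB m hm (by simp at hms; omega))
    · simp [Polynomial.notMem_support_iff.mp hm]
  have partial_sum : ∑ m ∈ range (N + 1), ‖c.coeff m‖ ≤ l1Norm c := by
    rw [← sum_filter_ne_zero]
    refine sum_le_sum_of_subset_of_nonneg (fun m hm => ?_) fun _ _ _ => norm_nonneg _
    simpa using (mem_filter.mp hm).2
  rw [PowerSeries.coeff_mul]
  calc _ ≤ ∑ p ∈ antidiagonal N, ‖c.coeff p.1‖ * B := by
        refine (norm_sum_le _ _).trans (sum_le_sum fun p hp => ?_)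
        simpa only [Polynomial.coeff_coe] using termwise p hp
    _ = (∑ m ∈ range (N + 1), ‖c.coeff m‖) * B := by
        rw [← sum_mul, Nat.sum_antidiagonal_eq_sum_range_succ_mk]
    _ ≤ l1Norm c * B := by gcongr

theorem norm_coeff_eval₂_le (P : R[X][X]) (T : R⟦X⟧) (N : ℕ) {B : ℝ} (hB₀ : 0 ≤ B)
    (hB : ∀ j ∈ P.support, ∀ m ∈ (P.coeff j).support, m ≤ N →
      ‖coeff (N - m) (T ^ j)‖ ≤ B) :
    ‖coeff N (P.eval₂ ι T)‖ ≤
      (P.sum fun _ c => l1Norm c) * B := by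
  rw [Polynomial.eval₂_eq_sum, Polynomial.sum_def, map_sum, Polynomial.sum_def, sum_mul]
  exact (norm_sum_le _ _).trans
    (sum_le_sum fun j hj => norm_coeff_coe_mul_le _ _ _ hB₀ (hB j hj))

theorem norm_coeff_pow_le_of_add_eq {T : R⟦X⟧} {ε M : ℝ} {n r d m s : ℕ} (hM : 1 ≤ M)
    (hε : 8 * ε ≤ 1) (hT : ∀ k, ‖coeff k T‖ ≤ ε * geomWeight M k)
    (hTn : ∀ k, n ≤ k → coeff k T = 0) (hms : m + s = n + r) (hm : m ≤ d) (hdn : d < n)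
    (j : ℕ) :
    ‖coeff s (T ^ j)‖ ≤ ε * ((d + 1) ^ 2 * geomWeight M n * (1 / M + 8 * ε * M ^ r)) := by
  have hε₀ : 0 ≤ ε := by simpa using (norm_nonneg _).trans (hT 0)
  have hM₀ : 0 < M := by linarith
  have hwn := geomWeight_nonneg hM₀.le n
  have hws := geomWeight_le_of_add_eq hM₀.le hms hm
  rcases j with _ | _ | j
  · rw [pow_zero, coeff_one, if_neg (by omega), norm_zero]
    positivity
  · rw [pow_one]
    by_cases hs : n ≤ s
    · rw [hTn s hs, norm_zero]
      positivity
    have split : ε * ((d + 1) ^ 2 * geomWeight M n * (1 / M + 8 * ε * M ^ r)) =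
        ε * ((d + 1) ^ 2 * (geomWeight M n / M)) +
          ε * ((d + 1) ^ 2 * geomWeight M n * (8 * ε * M ^ r)) := by ring
    calc ‖coeff s T‖ ≤ ε * geomWeight M s := hT s
      _ ≤ ε * ((d + 1) ^ 2 * (M ^ s / ((n + r : ℕ) + 1) ^ 2)) := by
          rw [← mul_div_assoc]; exact mul_le_mul_of_nonneg_left hws hε₀
      _ ≤ ε * ((d + 1) ^ 2 * (geomWeight M n / M)) := by
          gcongr ε * (_ * ?_)
          exact pow_div_sq_le_geomWeight_div hM (by omega) (by omega)
      _ ≤ _ := by rw [split]; exact le_add_of_nonneg_right (by positivity)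
  · have hpow : (8 * ε) ^ (j + 1) ≤ 8 * ε := pow_le_of_le_one (by positivity) hε (by omega)
    have hwsN : geomWeight M s ≤ (d + 1) ^ 2 * geomWeight M (n + r) := by
      refine hws.trans ?_
      rw [geomWeight, ← mul_div_assoc]
      gcongr
      omega
    calc ‖coeff s (T ^ (j + 1 + 1))‖ ≤ (8 * ε) ^ (j + 1) * ε * geomWeight M s :=
          norm_coeff_pow_succ_le_of_le_geomWeight hM₀.le hT (j + 1) s
      _ ≤ 8 * ε * ε * ((d + 1) ^ 2 * (M ^ r * geomWeight M n)) := by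
          gcongr
          · exact geomWeight_nonneg hM₀.le s
          · exact hwsN.trans (by gcongr; exact geomWeight_add_le hM n r)
      _ ≤ _ := by
          have : 0 ≤ (d + 1 : ℝ) ^ 2 * geomWeight M n * (1 / M) := by positivity
          nlinarith

theorem norm_coeff_add_coe_le_pow {A : R⟦X⟧} {C : ℝ} (hC : 0 ≤ C)
    (hA : ∀ n, ‖coeff n A‖ ≤ C ^ (n + 1)) (t : R[X]) (n : ℕ) :
    ‖coeff n (A + (t : R⟦X⟧))‖ ≤ (C + (l1Norm t + 1)) ^ (n + 1) := by
  have ht : ‖t.coeff n‖ ≤ (l1Norm t + 1) ^ (n + 1) :=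
    (norm_coeff_le_l1Norm t n).trans <| (le_add_of_nonneg_right zero_le_one).trans <|
      le_self_pow₀ (by linarith [l1Norm_nonneg t]) (by omega)
  calc ‖coeff n (A + (t : R⟦X⟧))‖ ≤ C ^ (n + 1) + (l1Norm t + 1) ^ (n + 1) := by
        rw [map_add, Polynomial.coeff_coe]
        exact (norm_add_le _ _).trans (add_le_add (hA n) ht)
    _ ≤ _ := pow_add_pow_le hC (by linarith [l1Norm_nonneg t]) (by omega)

end NormedRing

theorem coeff_add_mul_of_forall_lt {R : Type*} [CommSemiring R] {G U : R⟦X⟧} {r n : ℕ}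
    (hG : ∀ i < r, coeff i G = 0) (hU : ∀ j < n, coeff j U = 0) :
    coeff (r + n) (G * U) = coeff r G * coeff n U := by
  obtain ⟨G, rfl⟩ := X_pow_dvd_iff.mpr hG
  obtain ⟨U, rfl⟩ := X_pow_dvd_iff.mpr hU
  rw [mul_mul_mul_comm, ← pow_add]
  simp [coeff_X_pow_mul']

theorem coeff_derivative_eval₂_mul_coeff {R S : Type*} [CommRing R] [CommSemiring S]
    (f : S →+* R⟦X⟧) {P : S[X]} {A : R⟦X⟧} {r n : ℕ} (hrn : r < n) (hP : P.eval₂ f A = 0)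
    (hG : ∀ i < r, coeff i ((Polynomial.derivative P).eval₂ f A) = 0) :
    coeff r ((Polynomial.derivative P).eval₂ f A) * coeff n A =
      -coeff (n + r) (P.eval₂ f (trunc n A)) := by
  set U := A - trunc n A
  have hU : ∀ j < n, coeff j U = 0 := fun j hj => by simp [U, coeff_trunc, hj]
  obtain ⟨k, hk⟩ := (P.map f).binomExpansion A (-U)
  rw [Polynomial.derivative_map, Polynomial.eval_map, Polynomial.eval_map, Polynomial.eval_map,
    hP, show A + -U = trunc n A by simp [U]] at hk
  have hU2 : coeff (n + r) (k * (-U) ^ 2) = 0 := by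
    refine X_pow_dvd_iff.mp (dvd_mul_of_dvd_right ?_ k) _ (by omega : n + r < n + n)
    rw [neg_sq, pow_two, pow_add]
    exact mul_dvd_mul (X_pow_dvd_iff.mpr hU) (X_pow_dvd_iff.mpr hU)
  have hGU := coeff_add_mul_of_forall_lt hG hU
  rw [hk, zero_add, map_add, hU2, add_zero, mul_neg, map_neg, add_comm n, hGU]
  simp [U, coeff_trunc]

theorem IsAlgebraicPS.exists_eval₂_eq_zero_derivative_ne_zero {K : Type*} [CommRing K]
    [IsDomain K] [CharZero K] {F : K⟦X⟧} (h : IsAlgebraicPS F) :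
    ∃ P : K[X][X], P.eval₂ ι F = 0 ∧ (Polynomial.derivative P).eval₂ ι F ≠ 0 := by
  obtain ⟨P, hP₀, hPF⟩ := h
  induction hn : P.natDegree using Nat.strong_induction_on generalizing P with
  | _ n ih =>
    by_cases hG : (Polynomial.derivative P).eval₂ ι F = 0
    · have hP' : Polynomial.derivative P ≠ 0 := fun hP' => by
        rw [Polynomial.eq_C_of_derivative_eq_zero hP', Polynomial.eval₂_C,
          Polynomial.coeToPowerSeries.ringHom_apply, Polynomial.coe_eq_zero_iff] at hPF
        exact hP₀ (by rw [Polynomial.eq_C_of_derivative_eq_zero hP', hPF, map_zero])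
      have hlt := Polynomial.natDegree_derivative_lt (mt Polynomial.derivative_eq_zero.mpr hP')
      exact ih _ (hn ▸ hlt) _ hP' hG rfl
    · exact ⟨P, hPF, hG⟩

theorem exists_geomWeight_constants {η κ S : ℝ} (hη : 0 < η) (hκ : 0 ≤ κ) (r N₀ : ℕ) :
    ∃ ε M : ℝ, 1 ≤ M ∧ 0 ≤ ε ∧ 8 * ε ≤ 1 ∧ κ * (1 / M + 8 * ε * M ^ r) ≤ η ∧
      ∀ n, r < n → n ≤ N₀ → S ≤ ε * geomWeight M n := by
  set δ := min (1 / 8) (η / (16 * (κ + 1)))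
  have hδ : 0 < δ := lt_min (by norm_num) (by positivity)
  have hδ8 : δ ≤ 1 / 8 := min_le_left _ _
  have hκδ : κ * (8 * δ) ≤ η / 2 := by
    have : δ ≤ η / (16 * (κ + 1)) := min_le_right _ _
    rw [le_div_iff₀ (by positivity)] at this
    nlinarith
  obtain ⟨M, hM1, hMκ, hMS⟩ := ((Filter.eventually_ge_atTop 1).and
    ((Filter.eventually_ge_atTop (2 * κ / η)).and
      (Filter.eventually_ge_atTop (S * ((N₀ : ℝ) + 1) ^ 2 / δ)))).exists
  have hM₀ : 0 < M := by linarith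
  refine ⟨δ / M ^ r, M, hM1, by positivity, ?_, ?_, fun n hrn hn => ?_⟩
  · calc 8 * (δ / M ^ r) ≤ 8 * δ := by gcongr; exact div_le_self hδ.le (one_le_pow₀ hM1)
      _ ≤ 1 := by linarith
  · have hκM : κ / M ≤ η / 2 := by
      rw [div_le_iff₀ hM₀]; rw [div_le_iff₀ hη] at hMκ; linarith
    calc κ * (1 / M + 8 * (δ / M ^ r) * M ^ r) = κ / M + κ * (8 * δ) := by
          field_simp
      _ ≤ η := by linarith
  · calc S ≤ δ * M / ((N₀ : ℝ) + 1) ^ 2 := by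
          rw [le_div_iff₀ (by positivity), mul_comm δ, ← div_le_iff₀ hδ]; exact hMS
      _ ≤ δ * M ^ (n - r) / ((n : ℝ) + 1) ^ 2 := by
          gcongr
          exact le_self_pow₀ hM1 (by omega)
      _ = δ / M ^ r * geomWeight M n := by
          rw [geomWeight, ← pow_sub_mul_pow M (by omega : r ≤ n)]; field_simp

section NormedField

variable {K : Type*} [NormedField K] {P : K[X][X]} {A : K⟦X⟧} {r d : ℕ} {ε M : ℝ}

theorem norm_coeff_le_geomWeight_of_forall_lt (hP : P.eval₂ ι A = 0)
    (hG : ∀ i < r, coeff i ((Polynomial.derivative P).eval₂ ι A) = 0)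
    (hGr : coeff r ((Polynomial.derivative P).eval₂ ι A) ≠ 0)
    (hd : ∀ j, (P.coeff j).natDegree ≤ d) (hM : 1 ≤ M) (hε : 8 * ε ≤ 1)
    (hsmall : (P.sum fun _ c => l1Norm c) * (d + 1) ^ 2 * (1 / M + 8 * ε * M ^ r) ≤
      ‖coeff r ((Polynomial.derivative P).eval₂ ι A)‖)
    {n : ℕ} (hrn : r < n) (hdn : d < n) (ih : ∀ k < n, ‖coeff k A‖ ≤ ε * geomWeight M k) :
    ‖coeff n A‖ ≤ ε * geomWeight M n := by
  have hε₀ : 0 ≤ ε := by simpa using (norm_nonneg _).trans (ih 0 (by omega))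
  have hwn := geomWeight_nonneg (by linarith) n (M := M)
  have hT : ∀ k, ‖coeff k (trunc n A : K⟦X⟧)‖ ≤ ε * geomWeight M k := fun k => by
    rw [Polynomial.coeff_coe, coeff_trunc]
    split_ifs with hk
    · exact ih k hk
    · rw [norm_zero]; exact mul_nonneg hε₀ (geomWeight_nonneg (by linarith) k)
  have hTn : ∀ k, n ≤ k → coeff k (trunc n A : K⟦X⟧) = 0 := fun k hk => by
    rw [Polynomial.coeff_coe, coeff_trunc, if_neg (by omega)]
  have hB := norm_coeff_eval₂_le P (trunc n A) (n + r) (by positivity)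
    fun j _ m hm hmN => norm_coeff_pow_le_of_add_eq (n := n) (r := r) (m := m) hM hε hT hTn
      (by omega) ((Polynomial.le_natDegree_of_mem_supp m hm).trans (hd j)) hdn j
  have key := coeff_derivative_eval₂_mul_coeff ι (P := P) hrn hP hG
  refine le_of_mul_le_mul_left ?_ (norm_pos_iff.mpr hGr)
  calc _ = ‖coeff (n + r) (P.eval₂ ι (trunc n A))‖ := by rw [← norm_mul, key, norm_neg]
    _ ≤ _ := hB
    _ = (P.sum fun _ c => l1Norm c) * (d + 1) ^ 2 * (1 / M + 8 * ε * M ^ r) *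
          (ε * geomWeight M n) := by ring
    _ ≤ _ := by gcongr

theorem norm_coeff_le_geomWeight (hP : P.eval₂ ι A = 0)
    (hG : ∀ i < r, coeff i ((Polynomial.derivative P).eval₂ ι A) = 0)
    (hGr : coeff r ((Polynomial.derivative P).eval₂ ι A) ≠ 0)
    (hd : ∀ j, (P.coeff j).natDegree ≤ d) (hM : 1 ≤ M) (hε : 8 * ε ≤ 1)
    (hsmall : (P.sum fun _ c => l1Norm c) * (d + 1) ^ 2 * (1 / M + 8 * ε * M ^ r) ≤
      ‖coeff r ((Polynomial.derivative P).eval₂ ι A)‖)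
    (hbase : ∀ n ≤ max r d, ‖coeff n A‖ ≤ ε * geomWeight M n) (n : ℕ) :
    ‖coeff n A‖ ≤ ε * geomWeight M n := by
  induction n using Nat.strong_induction_on with
  | _ n ih =>
    by_cases hn : n ≤ max r d
    · exact hbase n hn
    · exact norm_coeff_le_geomWeight_of_forall_lt hP hG hGr hd hM hε hsmall (by omega)
        (by omega) ih

theorem exists_norm_coeff_le_pow_of_eval₂_eq_zero (hP : P.eval₂ ι A = 0)
    (hG : ∀ i < r, coeff i ((Polynomial.derivative P).eval₂ ι A) = 0)
    (hGr : coeff r ((Polynomial.derivative P).eval₂ ι A) ≠ 0) (hA : ∀ k ≤ r, coeff k A = 0) :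
    ∃ C : ℝ, 0 < C ∧ ∀ n, ‖coeff n A‖ ≤ C ^ (n + 1) := by
  set d := P.support.sup fun j => (P.coeff j).natDegree
  have hd : ∀ j, (P.coeff j).natDegree ≤ d := fun j => by
    by_cases hj : j ∈ P.support
    · exact le_sup (f := fun j => (P.coeff j).natDegree) hj
    · simp [Polynomial.notMem_support_iff.mp hj]
  set S := ∑ k ∈ range (max r d + 1), ‖coeff k A‖
  have hL : 0 ≤ P.sum fun _ c => l1Norm c := sum_nonneg fun _ _ => l1Norm_nonneg _
  obtain ⟨ε, M, hM, hε₀, hε, hsmall, hS⟩ :=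
    exists_geomWeight_constants (κ := (P.sum fun _ c => l1Norm c) * (d + 1) ^ 2) (S := S)
      (norm_pos_iff.mpr hGr) (by positivity) r (max r d)
  have hbase : ∀ n ≤ max r d, ‖coeff n A‖ ≤ ε * geomWeight M n := fun n hn => by
    by_cases hnr : n ≤ r
    · rw [hA n hnr, norm_zero]
      exact mul_nonneg hε₀ (geomWeight_nonneg (by linarith) n)
    · refine le_trans ?_ (hS n (by omega) hn)
      exact single_le_sum (f := fun k => ‖coeff k A‖) (fun _ _ => norm_nonneg _)
        (mem_range.mpr (by omega))
  refine ⟨M, by linarith, fun n => ?_⟩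
  calc ‖coeff n A‖ ≤ ε * geomWeight M n :=
        norm_coeff_le_geomWeight hP hG hGr hd hM hε hsmall hbase n
    _ ≤ 1 * M ^ n :=
        mul_le_mul (by linarith) (geomWeight_le_pow (by linarith) n)
          (geomWeight_nonneg (by linarith) n) zero_le_one
    _ ≤ M ^ (n + 1) := by rw [one_mul]; exact pow_le_pow_right₀ hM (by omega)

theorem exists_norm_coeff_le_pow_of_derivative_ne_zero (hP : P.eval₂ ι A = 0)
    (hG : (Polynomial.derivative P).eval₂ ι A ≠ 0) :
    ∃ C : ℝ, 0 < C ∧ ∀ n, ‖coeff n A‖ ≤ C ^ (n + 1) := by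
  set r := ((Polynomial.derivative P).eval₂ ι A).order.toNat
  set t := trunc (r + 1) A
  -- Shifting by the truncation `t` makes the root vanish to order `r + 1` without changing
  -- `P(A)` or `P'(A)`.
  have shift : ∀ Q : K[X][X], (Q.comp (Polynomial.X + Polynomial.C t)).eval₂ ι (A - (t : K⟦X⟧)) =
      Q.eval₂ ι A := fun Q => by simp [Polynomial.eval₂_comp]
  have shift' : (Polynomial.derivative (P.comp (Polynomial.X + Polynomial.C t))).eval₂ ι
      (A - (t : K⟦X⟧)) = (Polynomial.derivative P).eval₂ ι A := by
    simp [Polynomial.derivative_comp, shift]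
  obtain ⟨C, hC, hA⟩ := exists_norm_coeff_le_pow_of_eval₂_eq_zero
    (by rwa [shift]) (fun i hi => by rw [shift']; exact coeff_of_lt_order_toNat i hi)
    (by rw [shift']; exact coeff_order hG) fun k (hk : k ≤ r) => by simp [t, coeff_trunc, hk]
  exact ⟨C + (l1Norm t + 1), by linarith [l1Norm_nonneg t], fun n => by
    simpa using norm_coeff_add_coe_le_pow hC.le hA t n⟩

end NormedField

/-- An algebraic power series over `ℂ` has positive radius of convergence: its
coefficients are bounded by `C^(n+1)` for some `C > 0`. -/
theorem coeff_bound_of_isAlgebraicPS (F : PowerSeries ℂ) (h : IsAlgebraicPS F) :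
    ∃ C : ℝ, 0 < C ∧ ∀ n : ℕ, ‖PowerSeries.coeff n F‖ ≤ C ^ (n + 1) := by
  obtain ⟨P, hP, hG⟩ := h.exists_eval₂_eq_zero_derivative_ne_zero
  exact exists_norm_coeff_le_pow_of_derivative_ne_zero hP hG
end

section
/- Let A = Σ aₙ zⁿ ∈ ℂ⟦z⟧ be a formal power series of finite Hadamard grade over ℂ. Then A has positive radius of convergence: there exists a real constant C > 0 such that |aₙ| ≤ C^{n+1} for all n ≥ 0. -/
/-!
The Hadamard product multiplies coefficients, so bounds `‖aₙ‖ ≤ Cⁿ⁺¹` multiply and it suffices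
to treat a single algebraic series `A`. In characteristic zero, passing to derivatives gives an
annihilating polynomial `P` with `P'(A) ≠ 0`; let `v` be the order of `P'(A)` and
`c = [zᵛ] P'(A) ≠ 0`. Taylor expansion at `A` gives, for `n > v`, the recurrence
`c · aₙ = -[z^(v+n)] P(a₀ + ⋯ + aₙ₋₁ zⁿ⁻¹)`. After subtracting from `A` its truncation below
order `v + 1`, a strong induction proves `‖aₙ‖ ≤ ε wₙ Mⁿ` with the weights `wₙ = (n+1)⁻²`, which
satisfy `∑_{i+j=n} wᵢ wⱼ ≤ 8 wₙ`: the terms of `P(T)` of degree at least two in `T` carry the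
small factor `ε Mᵛ`, and the linear term gains a factor `1 / M` because only coefficients of
index below `n` enter it.
-/

open PowerSeries

open Finset

noncomputable def invSq (i : ℕ) : ℝ := (((i : ℝ) + 1) ^ 2)⁻¹

lemma invSq_pos (i : ℕ) : 0 < invSq i := by unfold invSq; positivity

lemma invSq_le_one (i : ℕ) : invSq i ≤ 1 :=
  inv_le_one_of_one_le₀ (one_le_pow₀ (by simp))

lemma invSq_anti {i j : ℕ} (h : i ≤ j) : invSq j ≤ invSq i := by
  unfold invSq
  gcongr

lemma invSq_le_four_mul {i n : ℕ} (h : n + 1 ≤ 2 * (i + 1)) : invSq i ≤ 4 * invSq n := by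
  have h' : (n : ℝ) + 1 ≤ 2 * ((i : ℝ) + 1) := by exact_mod_cast h
  unfold invSq
  rw [← div_eq_mul_inv, le_div_iff₀ (by positivity), ← div_eq_inv_mul,
    div_le_iff₀ (by positivity)]
  nlinarith

lemma sum_range_invSq_le_two (m : ℕ) : ∑ i ∈ range m, invSq i ≤ 2 := by
  have h := sum_Ioo_inv_sq_le (α := ℝ) 0 (m + 1)
  rw [← Ico_add_one_left_eq_Ioo, sum_Ico_eq_sum_range] at h
  simpa [invSq, add_comm] using h

lemma sum_antidiagonal_invSq_mul_le (m : ℕ) :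
    ∑ p ∈ antidiagonal m, invSq p.1 * invSq p.2 ≤ 8 * invSq m := by
  have hterm : ∀ p ∈ antidiagonal m,
      invSq p.1 * invSq p.2 ≤ 2 * invSq m * (invSq p.1 + invSq p.2) := by
    rintro ⟨i, j⟩ hp
    rw [HasAntidiagonal.mem_antidiagonal] at hp
    have hm : (m : ℝ) + 1 ≤ ((i : ℝ) + 1) + ((j : ℝ) + 1) := by rw [← hp]; push_cast; linarith
    unfold invSq
    field_simp
    nlinarith [sq_nonneg ((i : ℝ) - j)]
  calc ∑ p ∈ antidiagonal m, invSq p.1 * invSq p.2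
      ≤ ∑ p ∈ antidiagonal m, 2 * invSq m * (invSq p.1 + invSq p.2) := sum_le_sum hterm
    _ = 2 * invSq m * (2 * ∑ i ∈ range (m + 1), invSq i) := by
      rw [← mul_sum, sum_add_distrib, ← Nat.sum_antidiagonal_swap (f := fun p => invSq p.2)]
      simp only [Prod.snd_swap]
      rw [Nat.sum_antidiagonal_eq_sum_range_succ_mk]
      ring
    _ ≤ 8 * invSq m := by nlinarith [sum_range_invSq_le_two (m + 1), invSq_pos m]

section CoeffBound

variable {R : Type*} [NormedRing R]

def CoeffBoundedBy (M c : ℝ) (F : PowerSeries R) : Prop :=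
  ∀ i, ‖coeff i F‖ ≤ c * invSq i * M ^ i

namespace CoeffBoundedBy

variable {M c c' : ℝ} {F G : PowerSeries R}

lemma nonneg (h : CoeffBoundedBy M c F) : 0 ≤ c := by
  simpa [invSq] using (norm_nonneg _).trans (h 0)

lemma mono (h : CoeffBoundedBy M c F) (hc : c ≤ c') (hM : 0 ≤ M) : CoeffBoundedBy M c' F :=
  fun i => (h i).trans <| by have := invSq_pos i; gcongr

lemma mul (hM : 0 ≤ M) (hF : CoeffBoundedBy M c F) (hG : CoeffBoundedBy M c' G) :
    CoeffBoundedBy M (8 * c * c') (F * G) := by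
  intro m
  have hterm : ∀ p ∈ antidiagonal m, ‖coeff p.1 F * coeff p.2 G‖
      ≤ c * c' * M ^ m * (invSq p.1 * invSq p.2) := by
    rintro ⟨i, j⟩ hp
    rw [HasAntidiagonal.mem_antidiagonal] at hp
    calc ‖coeff i F * coeff j G‖ ≤ (c * invSq i * M ^ i) * (c' * invSq j * M ^ j) :=
          (norm_mul_le _ _).trans <|
            mul_le_mul (hF i) (hG j) (norm_nonneg _) ((norm_nonneg _).trans (hF i))
      _ = c * c' * M ^ m * (invSq i * invSq j) := by rw [← hp, pow_add]; ring
  have hcc' : 0 ≤ c * c' * M ^ m := by have := hF.nonneg; have := hG.nonneg; positivity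
  calc ‖coeff m (F * G)‖ ≤ ∑ p ∈ antidiagonal m, ‖coeff p.1 F * coeff p.2 G‖ := by
        rw [coeff_mul]; exact norm_sum_le _ _
    _ ≤ c * c' * M ^ m * ∑ p ∈ antidiagonal m, invSq p.1 * invSq p.2 := by
        rw [mul_sum]; exact sum_le_sum hterm
    _ ≤ c * c' * M ^ m * (8 * invSq m) := by
        gcongr; exact sum_antidiagonal_invSq_mul_le m
    _ = 8 * c * c' * invSq m * M ^ m := by ring

lemma pow [NormOneClass R] (hM : 0 ≤ M) (h : CoeffBoundedBy M c F) (j : ℕ) :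
    CoeffBoundedBy M (8 ^ j * c ^ j) (F ^ j) := by
  induction j with
  | zero =>
    intro i
    rw [pow_zero, coeff_one]
    split_ifs with hi
    · simp [hi, invSq]
    · have := invSq_pos i
      simp only [norm_zero]
      positivity
  | succ j ih =>
    rw [_root_.pow_succ]
    exact (ih.mul hM h).mono (le_of_eq (by ring)) hM

end CoeffBoundedBy

lemma coeffBoundedBy_coe {p : Polynomial R} {D : ℕ} {B M : ℝ} (hM : 1 ≤ M)
    (hpD : p.natDegree ≤ D) (hpB : ∀ k, ‖p.coeff k‖ ≤ B) :
    CoeffBoundedBy M (B * ((D : ℝ) + 1) ^ 2) (p : PowerSeries R) := by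
  intro k
  have hB : 0 ≤ B := (norm_nonneg _).trans (hpB 0)
  rw [Polynomial.coeff_coe]
  rcases le_or_gt k D with hk | hk
  · have hkD : ((k : ℝ) + 1) ^ 2 ≤ ((D : ℝ) + 1) ^ 2 := by gcongr
    calc ‖p.coeff k‖ ≤ B * (((D : ℝ) + 1) ^ 2 * invSq k) := by
          rw [invSq, ← div_eq_mul_inv, mul_div_assoc', le_div_iff₀ (by positivity)]
          nlinarith [hpB k]
      _ ≤ B * ((D : ℝ) + 1) ^ 2 * invSq k * M ^ k := by
          rw [← mul_assoc]
          exact le_mul_of_one_le_right (by have := invSq_pos k; positivity) (one_le_pow₀ hM)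
  · rw [Polynomial.coeff_eq_zero_of_natDegree_lt (hpD.trans_lt hk), norm_zero]
    have := invSq_pos k
    have : 0 ≤ M := by linarith
    positivity

end CoeffBound

local notation "ρ" => Polynomial.coeToPowerSeries.ringHom

lemma coeff_add_mul_of_X_pow_dvd {R : Type*} [CommSemiring R] {f g : PowerSeries R} {v n : ℕ}
    (hf : X ^ v ∣ f) (hg : X ^ n ∣ g) : coeff (v + n) (f * g) = coeff v f * coeff n g := by
  obtain ⟨f, rfl⟩ := hf
  obtain ⟨g, rfl⟩ := hg
  rw [show X ^ v * f * (X ^ n * g) = X ^ (v + n) * (f * g) by ring]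
  simp only [coeff_X_pow_mul', le_refl, if_true, Nat.sub_self, coeff_zero_eq_constantCoeff,
    map_mul]

section Recurrence

variable {R : Type*} [CommRing R]

lemma X_pow_dvd_sub_trunc (A : PowerSeries R) (n : ℕ) : X ^ n ∣ A - (trunc n A : PowerSeries R) :=
  X_pow_dvd_iff.mpr fun i hi => by
    rw [map_sub, Polynomial.coeff_coe, coeff_trunc, if_pos hi, sub_self]

/-- Taylor expansion at `A` gives `P(trunc n A) ≡ -P'(A) · (A - trunc n A)` modulo `X ^ (2n)`;
since `X ^ v` divides `P'(A)` and `v < n`, the coefficient of index `v + n` only sees `aₙ`. -/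
lemma coeff_mul_coeff_eq_neg_coeff_eval₂_trunc {A : PowerSeries R}
    {P : Polynomial (Polynomial R)} {v n : ℕ} (hPA : P.eval₂ ρ A = 0)
    (hv : X ^ v ∣ P.derivative.eval₂ ρ A) (hvn : v < n) :
    coeff v (P.derivative.eval₂ ρ A) * coeff n A
      = -coeff (v + n) (P.eval₂ ρ (trunc n A : PowerSeries R)) := by
  set w := A - (trunc n A : PowerSeries R)
  have hw : X ^ n ∣ w := X_pow_dvd_sub_trunc A n
  obtain ⟨k, hk⟩ := (P.map ρ).binomExpansion A (-w)
  rw [show A + -w = (trunc n A : PowerSeries R) by ring, Polynomial.derivative_map] at hk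
  simp only [Polynomial.eval_map, hPA, zero_add] at hk
  have hw2 : X ^ (2 * n) ∣ (-w) ^ 2 := by rw [neg_sq, pow_mul']; exact pow_dvd_pow_of_dvd hw 2
  have hquad : coeff (v + n) (k * (-w) ^ 2) = 0 :=
    X_pow_dvd_iff.mp (dvd_mul_of_dvd_right hw2 k) _ (by omega)
  have hwn : coeff n w = coeff n A := by
    rw [map_sub, Polynomial.coeff_coe, coeff_trunc, if_neg (lt_irrefl n), sub_zero]
  rw [hk, map_add, hquad, add_zero, mul_neg, map_neg, coeff_add_mul_of_X_pow_dvd hv hw, hwn,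
    neg_neg]

end Recurrence

section Estimates

variable {R : Type*} [NormedCommRing R]

lemma norm_coeff_coe_mul_le_s12 {p : Polynomial R} {T : PowerSeries R} {D m : ℕ} {B β : ℝ}
    (hpD : p.natDegree ≤ D) (hDm : D ≤ m) (hpB : ∀ k, ‖p.coeff k‖ ≤ B)
    (hT : ∀ k ≤ D, ‖coeff (m - k) T‖ ≤ β) :
    ‖coeff m ((p : PowerSeries R) * T)‖ ≤ (D + 1) * (B * β) := by
  have hB : 0 ≤ B := (norm_nonneg _).trans (hpB 0)
  rw [coeff_mul,
    Nat.sum_antidiagonal_eq_sum_range_succ (fun i j => coeff i (p : PowerSeries R) * coeff j T),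
    ← sum_subset (range_subset_range.mpr (by omega : D + 1 ≤ m + 1)) fun k _ hk => by
      rw [Polynomial.coeff_coe, Polynomial.coeff_eq_zero_of_natDegree_lt (by simp at hk; omega),
        zero_mul]]
  calc _ ≤ ∑ k ∈ range (D + 1), ‖coeff k (p : PowerSeries R) * coeff (m - k) T‖ :=
        norm_sum_le _ _
    _ ≤ ∑ k ∈ range (D + 1), B * β := sum_le_sum fun k hk => by
        rw [Polynomial.coeff_coe]
        exact (norm_mul_le _ _).trans
          (mul_le_mul (hpB k) (hT k (by simp at hk; omega)) (norm_nonneg _) hB)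
    _ = (D + 1) * (B * β) := by rw [sum_const, card_range, nsmul_eq_mul]; push_cast; ring

/-- Only the coefficients of `trunc n A` of index at least `n - D` enter, and each of them is
smaller than the bound at `n` by a factor `M`. -/
lemma norm_coeff_coe_mul_trunc_mul_le {p : Polynomial R} {A : PowerSeries R} {D v n : ℕ}
    {B ε M : ℝ} (hpD : p.natDegree ≤ D) (hpB : ∀ k, ‖p.coeff k‖ ≤ B) (hM : 1 ≤ M)
    (hε : 0 ≤ ε) (hn : 2 * D + 1 ≤ n) (hA : ∀ i < n, ‖coeff i A‖ ≤ ε * invSq i * M ^ i) :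
    ‖coeff (v + n) ((p : PowerSeries R) * (trunc n A : PowerSeries R))‖ * M
      ≤ (D + 1) * (B * (4 * ε * invSq n * M ^ n)) := by
  have hB : 0 ≤ B := (norm_nonneg _).trans (hpB 0)
  have hwn := invSq_pos n
  have hlow : ∀ k ≤ D, ‖coeff (v + n - k) (trunc n A : PowerSeries R)‖
      ≤ 4 * ε * invSq n * M ^ (n - 1) := by
    intro k hk
    rw [Polynomial.coeff_coe, coeff_trunc]
    split_ifs with hkn
    · calc _ ≤ ε * invSq (v + n - k) * M ^ (v + n - k) := hA _ hkn
        _ ≤ ε * (4 * invSq n) * M ^ (n - 1) :=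
          mul_le_mul (mul_le_mul_of_nonneg_left (invSq_le_four_mul (by omega)) hε)
            (pow_le_pow_right₀ hM (by omega)) (by positivity) (by positivity)
        _ = 4 * ε * invSq n * M ^ (n - 1) := by ring
    · rw [norm_zero]; positivity
  calc _ ≤ (D + 1) * (B * (4 * ε * invSq n * M ^ (n - 1))) * M :=
        mul_le_mul_of_nonneg_right (norm_coeff_coe_mul_le_s12 hpD (by omega) hpB hlow) (by linarith)
    _ = (D + 1) * (B * (4 * ε * invSq n * M ^ n)) := by
        rw [← pow_sub_one_mul (by omega : n ≠ 0) M]; ring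

lemma CoeffBoundedBy.mul_pow_of_two_le [NormOneClass R] {p T : PowerSeries R} {β ε M : ℝ} {j d : ℕ}
    (hM : 0 ≤ M) (hε1 : ε ≤ 1) (hp : CoeffBoundedBy M β p) (hT : CoeffBoundedBy M ε T)
    (hj : 2 ≤ j) (hjd : j ≤ d) : CoeffBoundedBy M (8 ^ (d + 1) * β * ε ^ 2) (p * T ^ j) := by
  have hε := hT.nonneg
  have hβ := hp.nonneg
  refine (hp.mul hM (hT.pow hM j)).mono ?_ hM
  calc 8 * β * (8 ^ j * ε ^ j) = 8 ^ (j + 1) * β * ε ^ j := by ring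
    _ ≤ 8 ^ (d + 1) * β * ε ^ 2 :=
      mul_le_mul (mul_le_mul_of_nonneg_right (pow_le_pow_right₀ (by norm_num) (by omega)) hβ)
        (pow_le_pow_of_le_one hε hε1 hj) (by positivity) (by positivity)

lemma norm_coeff_eval₂_trunc_le [NormOneClass R] {P : Polynomial (Polynomial R)} {A : PowerSeries R} {D v n : ℕ} {B δ ε M : ℝ}
    (hD : ∀ j, (P.coeff j).natDegree ≤ D) (hB : ∀ j k, ‖(P.coeff j).coeff k‖ ≤ B)
    (hM : 1 ≤ M) (hε : 0 ≤ ε) (hε1 : ε ≤ 1) (hn : v + 2 * D + 2 ≤ n)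
    (hlin : 4 * (D + 1) * B * (P.natDegree + 1) ≤ δ * M)
    (hquad : 8 ^ (P.natDegree + 1) * (B * (D + 1) ^ 2) * (ε * M ^ v) * (P.natDegree + 1) ≤ δ)
    (hA : ∀ i < n, ‖coeff i A‖ ≤ ε * invSq i * M ^ i) :
    ‖coeff (v + n) (P.eval₂ ρ (trunc n A : PowerSeries R))‖ ≤ δ * (ε * invSq n * M ^ n) := by
  set d := P.natDegree
  set T : PowerSeries R := ((trunc n A : Polynomial R) : PowerSeries R)
  have hwn := invSq_pos n
  have hT : CoeffBoundedBy M ε T := fun i => by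
    rw [Polynomial.coeff_coe, coeff_trunc]
    split_ifs with hi
    · exact hA i hi
    · rw [norm_zero]; have := invSq_pos i; positivity
  suffices hterm : ∀ j ≤ d, ‖coeff (v + n) (ρ (P.coeff j) * T ^ j)‖ * (d + 1)
      ≤ δ * (ε * invSq n * M ^ n) by
    rw [Polynomial.eval₂_eq_sum_range, map_sum]
    refine (norm_sum_le _ _).trans ?_
    calc _ ≤ ∑ j ∈ range (d + 1), δ * (ε * invSq n * M ^ n) / (d + 1) :=
          sum_le_sum fun j hj => by
            rw [le_div_iff₀ (by positivity)]; exact hterm j (by simp at hj; omega)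
      _ = δ * (ε * invSq n * M ^ n) := by
          rw [sum_const, card_range, nsmul_eq_mul]; push_cast; field_simp
  intro j hj
  have hB0 : 0 ≤ B := (norm_nonneg _).trans (hB 0 0)
  have hδ : 0 ≤ δ := le_trans (by positivity) hquad
  match j with
  | 0 =>
    rw [pow_zero, mul_one, Polynomial.coeToPowerSeries.ringHom_apply, Polynomial.coeff_coe,
      Polynomial.coeff_eq_zero_of_natDegree_lt (by have := hD 0; omega), norm_zero, zero_mul]
    positivity
  | 1 =>
    have h := norm_coeff_coe_mul_trunc_mul_le (v := v) (hD 1) (hB 1) hM hε (by omega) hA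
    rw [pow_one, Polynomial.coeToPowerSeries.ringHom_apply]
    refine le_of_mul_le_mul_right ?_ (by linarith : 0 < M)
    calc _ = ‖coeff (v + n) ((P.coeff 1 : PowerSeries R) * T)‖ * M * (d + 1) := by ring
      _ ≤ (D + 1) * (B * (4 * ε * invSq n * M ^ n)) * (d + 1) := by gcongr
      _ = 4 * (D + 1) * B * (d + 1) * (ε * invSq n * M ^ n) := by ring
      _ ≤ δ * M * (ε * invSq n * M ^ n) := by gcongr
      _ = _ := by ring
  | j + 2 =>
    have h := (coeffBoundedBy_coe hM (hD (j + 2)) (hB (j + 2))).mul_pow_of_two_le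
      (by linarith) hε1 hT (by omega) hj (v + n)
    calc _ ≤ 8 ^ (d + 1) * (B * (D + 1) ^ 2) * ε ^ 2 * invSq (v + n) * M ^ (v + n) * (d + 1) := by
          gcongr; exact h
      _ ≤ 8 ^ (d + 1) * (B * (D + 1) ^ 2) * ε ^ 2 * invSq n * M ^ (v + n) * (d + 1) := by
          gcongr _ * ?_ * _ * _; exact invSq_anti (by omega)
      _ = 8 ^ (d + 1) * (B * (D + 1) ^ 2) * (ε * M ^ v) * (d + 1) * (ε * invSq n * M ^ n) := by
          ring
      _ ≤ δ * (ε * invSq n * M ^ n) := by gcongr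

end Estimates

lemma Polynomial.exists_natDegree_coeff_le_and_norm_coeff_coeff_le {R : Type*} [NormedRing R]
    (P : Polynomial (Polynomial R)) :
    ∃ (D : ℕ) (B : ℝ), (∀ j, (P.coeff j).natDegree ≤ D) ∧ ∀ j k, ‖(P.coeff j).coeff k‖ ≤ B := by
  classical
  refine ⟨P.support.sup fun j => (P.coeff j).natDegree,
    ∑ j ∈ P.support, ∑ k ∈ (P.coeff j).support, ‖(P.coeff j).coeff k‖, fun j => ?_, fun j k => ?_⟩
  · by_cases hj : j ∈ P.support
    · exact le_sup (f := fun j => (P.coeff j).natDegree) hj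
    · simp [Polynomial.notMem_support_iff.mp hj]
  · have hsum : ∀ j, 0 ≤ ∑ k ∈ (P.coeff j).support, ‖(P.coeff j).coeff k‖ :=
      fun _ => sum_nonneg fun _ _ => norm_nonneg _
    by_cases hjk : j ∈ P.support ∧ k ∈ (P.coeff j).support
    · exact (single_le_sum (f := fun k => ‖(P.coeff j).coeff k‖) (fun _ _ => norm_nonneg _)
        hjk.2).trans (single_le_sum (fun j _ => hsum j) hjk.1)
    · have hzero : (P.coeff j).coeff k = 0 := by
        simp only [Polynomial.mem_support_iff, not_and_or, not_not] at hjk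
        rcases hjk with h | h <;> simp [h]
      rw [hzero, norm_zero]
      exact sum_nonneg fun j _ => hsum j

lemma exists_pos_le_one_mul_le {a δ : ℝ} (ha : 0 ≤ a) (hδ : 0 < δ) :
    ∃ γ, 0 < γ ∧ γ ≤ 1 ∧ a * γ ≤ δ :=
  ⟨min 1 (δ / (a + 1)), by positivity, min_le_left _ _,
    calc a * min 1 (δ / (a + 1)) ≤ (a + 1) * (δ / (a + 1)) :=
          mul_le_mul (by linarith) (min_le_right _ _) (by positivity) (by linarith)
      _ = δ := mul_div_cancel₀ _ (by positivity)⟩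

/-- The vanishing of `a₀, …, aᵥ` is what lets the bound `‖aₙ‖ ≤ ε wₙ Mⁿ`, with the small factor
`ε = γ / Mᵛ`, hold for the first indices. -/
lemma exists_norm_coeff_le_pow_of_coeff_eq_zero {K : Type*} [NormedField K]
    {A : PowerSeries K} {P : Polynomial (Polynomial K)} {v : ℕ} (hPA : P.eval₂ ρ A = 0)
    (hv : X ^ v ∣ P.derivative.eval₂ ρ A) (hc : coeff v (P.derivative.eval₂ ρ A) ≠ 0)
    (hA : ∀ i ≤ v, coeff i A = 0) : ∃ M, ∀ n, ‖coeff n A‖ ≤ M ^ n := by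
  obtain ⟨D, B, hD, hB⟩ := P.exists_natDegree_coeff_le_and_norm_coeff_coeff_le
  have hB0 : 0 ≤ B := (norm_nonneg _).trans (hB 0 0)
  set c := coeff v (P.derivative.eval₂ ρ A)
  set d := P.natDegree
  have hδ : 0 < ‖c‖ := norm_pos_iff.mpr hc
  obtain ⟨γ, hγ0, hγ1, hγ⟩ := exists_pos_le_one_mul_le
    (by positivity : 0 ≤ 8 ^ (d + 1) * (B * ((D : ℝ) + 1) ^ 2) * ((d : ℝ) + 1)) hδ
  obtain ⟨M, hM1, hlin, hbase⟩ : ∃ M : ℝ, 1 ≤ M ∧ 4 * (D + 1) * B * (d + 1) ≤ ‖c‖ * M ∧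
      ∀ i < v + 2 * D + 2, ‖coeff i A‖ ≤ γ * invSq i * M :=
    ((Filter.eventually_ge_atTop 1).and
      (((Filter.tendsto_id.const_mul_atTop hδ).eventually_ge_atTop _).and
      ((Filter.eventually_all_finite (Set.finite_Iio _)).mpr fun i _ =>
        (Filter.tendsto_id.const_mul_atTop (mul_pos hγ0 (invSq_pos i))).eventually_ge_atTop
          _))).exists
  set ε := γ / M ^ v
  have hMv : 0 < M ^ v := by positivity
  have hεM : ε * M ^ v = γ := div_mul_cancel₀ _ hMv.ne'
  have hε1 : ε ≤ 1 := (div_le_one hMv).mpr (hγ1.trans (one_le_pow₀ hM1))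
  have key : ∀ n, ‖coeff n A‖ ≤ ε * invSq n * M ^ n := by
    intro n
    induction n using Nat.strong_induction_on with | _ n ih =>
    have := invSq_pos n
    rcases le_or_gt n v with hnv | hvn
    · rw [hA n hnv, norm_zero]; positivity
    rcases lt_or_ge n (v + 2 * D + 2) with hnN | hnN
    · calc ‖coeff n A‖ ≤ γ * invSq n * M := hbase n hnN
        _ = ε * invSq n * M ^ (v + 1) := by rw [← hεM]; ring
        _ ≤ ε * invSq n * M ^ n := by gcongr; exact hvn
    · refine le_of_mul_le_mul_left ?_ hδ
      rw [← norm_mul, coeff_mul_coeff_eq_neg_coeff_eval₂_trunc hPA hv hvn, norm_neg]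
      exact norm_coeff_eval₂_trunc_le hD hB hM1 (by positivity) hε1 hnN hlin
        (by rw [hεM]; linarith) fun i hi => ih i hi
  refine ⟨M, fun n => (key n).trans ?_⟩
  calc ε * invSq n * M ^ n ≤ 1 * 1 * M ^ n := by
        gcongr
        exacts [(invSq_pos n).le, invSq_le_one n]
    _ = M ^ n := by ring

lemma exists_eval₂_eq_zero_and_derivative_ne_zero {K : Type*} [Field K] [CharZero K]
    {A : PowerSeries K} {P : Polynomial (Polynomial K)} (hP : P ≠ 0) (hPA : P.eval₂ ρ A = 0) :
    ∃ Q : Polynomial (Polynomial K), Q.eval₂ ρ A = 0 ∧ Q.derivative.eval₂ ρ A ≠ 0 := by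
  induction hn : P.natDegree using Nat.strong_induction_on generalizing P with | _ n ih =>
  by_cases hP'A : P.derivative.eval₂ ρ A = 0
  · have hdeg : P.natDegree ≠ 0 := fun h => by
      rw [Polynomial.eq_C_of_natDegree_eq_zero h, Polynomial.eval₂_C,
        Polynomial.coeToPowerSeries.ringHom_apply, Polynomial.coe_eq_zero_iff] at hPA
      exact hP (Polynomial.eq_C_of_natDegree_eq_zero h ▸ by rw [hPA, map_zero])
    exact ih _ (hn ▸ Polynomial.natDegree_derivative_lt hdeg)
      (mt Polynomial.derivative_eq_zero.mp hdeg) hP'A rfl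
  · exact ⟨P, hPA, hP'A⟩

/-- Substituting `y ↦ y + S` with `S` the truncation of `A` below the order `v` of `P'(A)`
reduces to a root vanishing to order `v`, without changing `P'(A)`. -/
lemma exists_norm_coeff_le_pow_of_eval₂_eq_zero_s12 {K : Type*} [NormedField K]
    {A : PowerSeries K} {P : Polynomial (Polynomial K)} (hPA : P.eval₂ ρ A = 0)
    (hP'A : P.derivative.eval₂ ρ A ≠ 0) : ∃ N M, ∀ n ≥ N, ‖coeff n A‖ ≤ M ^ n := by
  set v := (P.derivative.eval₂ ρ A).order.toNat
  set S : PowerSeries K := ((trunc (v + 1) A : Polynomial K) : PowerSeries K)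
  set Q := P.comp (Polynomial.X + Polynomial.C (trunc (v + 1) A))
  have hshift : (Polynomial.X + Polynomial.C (trunc (v + 1) A)).eval₂ ρ (A - S) = A := by
    simp [S]
  have hQ : Q.eval₂ ρ (A - S) = 0 := by rw [Polynomial.eval₂_comp, hshift, hPA]
  have hQ' : Q.derivative.eval₂ ρ (A - S) = P.derivative.eval₂ ρ A := by
    simp [Q, Polynomial.derivative_comp, Polynomial.eval₂_comp, hshift]
  have hcoeff : ∀ n, coeff n (A - S) = if n < v + 1 then 0 else coeff n A := fun n => by
    rw [map_sub, Polynomial.coeff_coe, coeff_trunc]; split_ifs <;> simp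
  obtain ⟨M, hM⟩ := exists_norm_coeff_le_pow_of_coeff_eq_zero (v := v) hQ
    (by rw [hQ']; exact X_pow_order_dvd) (by rw [hQ']; exact coeff_order hP'A)
    fun i hi => by rw [hcoeff, if_pos (by omega)]
  refine ⟨v + 1, M, fun n hn => ?_⟩
  simpa only [hcoeff, if_neg (by omega : ¬n < v + 1)] using hM n

lemma exists_le_pow_succ_of_forall_ge_le_pow {a : ℕ → ℝ} {N : ℕ} {M : ℝ}
    (h : ∀ n ≥ N, a n ≤ M ^ n) : ∃ C, 1 ≤ C ∧ ∀ n, a n ≤ C ^ (n + 1) := by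
  obtain ⟨C, hC1, hCM, hCa⟩ : ∃ C : ℝ, 1 ≤ C ∧ |M| ≤ C ∧ ∀ i < N, a i ≤ C :=
    ((Filter.eventually_ge_atTop 1).and ((Filter.eventually_ge_atTop |M|).and
      ((Filter.eventually_all_finite (Set.finite_Iio N)).mpr fun i _ =>
        Filter.eventually_ge_atTop (a i)))).exists
  refine ⟨C, hC1, fun n => ?_⟩
  rcases lt_or_ge n N with hn | hn
  · exact (hCa n hn).trans (le_self_pow₀ hC1 (by omega))
  · calc a n ≤ |M| ^ n := (h n hn).trans (pow_abs M n ▸ le_abs_self _)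
      _ ≤ C ^ n := pow_le_pow_left₀ (abs_nonneg M) hCM n
      _ ≤ C ^ (n + 1) := pow_le_pow_right₀ hC1 n.le_succ

lemma IsAlgebraicPS.exists_norm_coeff_le_pow_succ {K : Type*} [NormedField K] [CharZero K]
    {A : PowerSeries K} (hA : IsAlgebraicPS A) :
    ∃ C, 1 ≤ C ∧ ∀ n, ‖coeff n A‖ ≤ C ^ (n + 1) := by
  obtain ⟨P, hP, hPA⟩ := hA
  obtain ⟨Q, hQA, hQ'A⟩ := exists_eval₂_eq_zero_and_derivative_ne_zero hP hPA
  obtain ⟨N, M, h⟩ := exists_norm_coeff_le_pow_of_eval₂_eq_zero_s12 hQA hQ'A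
  exact exists_le_pow_succ_of_forall_ge_le_pow h

/-- A power series over `ℂ` of finite Hadamard grade has positive radius of
convergence: its coefficients are bounded by `C^(n+1)` for some `C > 0`. -/
theorem coeff_bound_of_finite_hadamardGrade (A : PowerSeries ℂ)
    (h : ∃ d : ℕ, HadamardGradeLe A d) :
    ∃ C : ℝ, 0 < C ∧ ∀ n : ℕ, ‖PowerSeries.coeff n A‖ ≤ C ^ (n + 1) := by
  obtain ⟨d, B, hB, hAB⟩ := h
  choose C hC1 hC using fun i => (hB i).exists_norm_coeff_le_pow_succ
  refine ⟨∏ i, C i, prod_pos fun i _ => one_pos.trans_le (hC1 i), fun n => ?_⟩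
  calc ‖coeff n A‖ = ∏ i, ‖coeff n (B i)‖ := by rw [hAB n, norm_prod]
    _ ≤ ∏ i, C i ^ (n + 1) := prod_le_prod (fun i _ => norm_nonneg _) fun i _ => hC i n
    _ = (∏ i, C i) ^ (n + 1) := prod_pow _ _ _
end

section
/- (Furstenberg) Let A = Σ aₙ zⁿ ∈ ℂ⟦z⟧ be a formal power series algebraic over ℂ(z). Then A is the complete diagonal of a rational power series in two variables: there exist polynomials P, Q ∈ ℂ[X, Y] with Q(0,0) ≠ 0 and a formal power series F ∈ ℂ⟦X, Y⟧ with Q · F = P, such that for every n ≥ 0 the coefficient of Xⁿ Yⁿ in F equals aₙ. -/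
open PowerSeries

/-!
Choose `P ∈ K[z][y]` of minimal degree with `P(A) = 0`, so that `P'(A) ≠ 0` in characteristic
zero, and let `r` be the order of `P'(A)`. Write `A = T + zˢ B` with `T` a polynomial, `s = r + 1`
and `B(0) = 0`. Taylor expansion shows that `Q(z, y) = P(z, T + zˢ y) / z^(s+r)` is a polynomial
with `Q(z, B) = 0` and `Q(0, 0) = 0 ≠ ∂Q/∂y(0, 0)`.

Factor `Q = (y - B) S` over `K⟦z⟧`, so `S(0, 0) = ∂Q/∂y(0, 0) ≠ 0`, and write `B = z g`. The
rational series `F = y² ∂Q/∂y(xy, y) / Q(xy, y)` equals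
`y / (1 - x g(xy)) + y² ∂S/∂y(xy, y) / S(xy, y)`. The diagonal of the first summand is `B`, and
every monomial `xᵃ yᵇ` of the second has `a < b`. Hence `A` is the diagonal of the rational
series `T(xy) + (xy)ˢ F`.
-/

noncomputable section

namespace MvPowerSeries

variable {σ R : Type*} [Finite σ] [Semiring R]

def diagonal (F : MvPowerSeries σ R) : R⟦X⟧ :=
  PowerSeries.mk fun n => coeff (Finsupp.equivFunOnFinite.symm fun _ => n) F

@[simp] lemma diagonal_add (F G : MvPowerSeries σ R) :
    diagonal (F + G) = diagonal F + diagonal G := by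
  ext n; simp [diagonal]

end MvPowerSeries

def IsRationalMvPS {σ R : Type*} [CommRing R] (F : MvPowerSeries σ R) : Prop :=
  ∃ P Q : MvPolynomial σ R, MvPolynomial.coeff 0 Q ≠ 0 ∧ (Q : MvPowerSeries σ R) * F = P

namespace IsRationalMvPS

variable {σ R : Type*} [CommRing R]

lemma coe [Nontrivial R] (p : MvPolynomial σ R) : IsRationalMvPS (p : MvPowerSeries σ R) :=
  ⟨p, 1, by simp, by simp⟩

lemma add [IsDomain R] {F G : MvPowerSeries σ R} (hF : IsRationalMvPS F)
    (hG : IsRationalMvPS G) : IsRationalMvPS (F + G) := by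
  obtain ⟨P, Q, hQ, hQF⟩ := hF
  obtain ⟨P', Q', hQ', hQG⟩ := hG
  refine ⟨P * Q' + Q * P', Q * Q', ?_, ?_⟩
  · simpa only [← MvPolynomial.constantCoeff_eq, map_mul] using mul_ne_zero hQ hQ'
  · push_cast
    rw [← hQF, ← hQG]
    ring

lemma mul [IsDomain R] {F G : MvPowerSeries σ R} (hF : IsRationalMvPS F)
    (hG : IsRationalMvPS G) : IsRationalMvPS (F * G) := by
  obtain ⟨P, Q, hQ, hQF⟩ := hF
  obtain ⟨P', Q', hQ', hQG⟩ := hG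
  refine ⟨P * P', Q * Q', ?_, ?_⟩
  · simpa only [← MvPolynomial.constantCoeff_eq, map_mul] using mul_ne_zero hQ hQ'
  · push_cast
    rw [← hQF, ← hQG]
    ring

end IsRationalMvPS

namespace Polynomial

lemma coeff_comp_C_add_C_mul_X {R : Type*} [CommRing R] (P : Polynomial R) (a u : R) (j : ℕ) :
    (P.comp (Polynomial.C a + Polynomial.C u * Polynomial.X)).coeff j =
      (Polynomial.hasseDeriv j P).eval a * u ^ j := by
  rw [show Polynomial.C a + Polynomial.C u * Polynomial.X =
      (Polynomial.X + Polynomial.C a).comp (Polynomial.C u * Polynomial.X) by simp [add_comm],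
    ← Polynomial.comp_assoc, ← Polynomial.taylor_apply, Polynomial.comp_C_mul_X_coeff,
    Polynomial.taylor_coeff]

lemma pow_dvd_eval_of_eval_eq_zero {S : Type*} [CommRing S] {p : Polynomial S} {a b x : S}
    {m r : ℕ} (hrm : r ≤ m) (ha : p.eval a = 0)
    (hr : x ^ r ∣ (Polynomial.derivative p).eval a) (hm : x ^ m ∣ b - a) :
    x ^ (m + r) ∣ p.eval b := by
  obtain ⟨k, hk⟩ := Polynomial.binomExpansion p a (b - a)
  rw [add_sub_cancel, ha, zero_add] at hk
  rw [hk]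
  refine dvd_add (by rw [pow_add, mul_comm]; exact mul_dvd_mul hr hm) (dvd_mul_of_dvd_right ?_ k)
  calc x ^ (m + r) ∣ x ^ (m * 2) := pow_dvd_pow x (by omega)
    _ = (x ^ m) ^ 2 := pow_mul x m 2
    _ ∣ (b - a) ^ 2 := pow_dvd_pow_of_dvd hm 2

lemma X_pow_dvd_coe_iff {R : Type*} [Semiring R] {p : Polynomial R} {n : ℕ} :
    (PowerSeries.X : R⟦X⟧) ^ n ∣ (p : R⟦X⟧) ↔ Polynomial.X ^ n ∣ p := by
  simp [PowerSeries.X_pow_dvd_iff, Polynomial.X_pow_dvd_iff]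

end Polynomial

namespace Furstenberg

open MvPowerSeries (diagonal)

variable {R : Type*}

def bideg (a b : ℕ) : Fin 2 →₀ ℕ := Finsupp.single 0 a + Finsupp.single 1 b

@[simp] lemma bideg_apply_zero (a b : ℕ) : bideg a b 0 = a := by simp [bideg]

@[simp] lemma bideg_apply_one (a b : ℕ) : bideg a b 1 = b := by simp [bideg]

lemma eq_bideg_iff {d : Fin 2 →₀ ℕ} {a b : ℕ} : d = bideg a b ↔ d 0 = a ∧ d 1 = b := by
  refine ⟨by rintro rfl; simp, fun ⟨h0, h1⟩ => ?_⟩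
  ext i; fin_cases i <;> simp [h0, h1]

lemma bideg_le_iff {a b : ℕ} {d : Fin 2 →₀ ℕ} :
    bideg a b ≤ d ↔ a ≤ d 0 ∧ b ≤ d 1 := by
  refine ⟨fun h => ⟨by simpa using h 0, by simpa using h 1⟩, fun h i => ?_⟩
  fin_cases i <;> simp [h.1, h.2]

lemma sub_bideg (d : Fin 2 →₀ ℕ) (a b : ℕ) : d - bideg a b = bideg (d 0 - a) (d 1 - b) := by
  rw [eq_bideg_iff]; simp

lemma eq_zero_iff_bideg {d : Fin 2 →₀ ℕ} : d = 0 ↔ d 0 = 0 ∧ d 1 = 0 := by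
  rw [show (0 : Fin 2 →₀ ℕ) = bideg 0 0 by simp [bideg], eq_bideg_iff]

lemma coeff_diagonal [Semiring R] (F : MvPowerSeries (Fin 2) R) (n : ℕ) :
    PowerSeries.coeff n (diagonal F) = MvPowerSeries.coeff (bideg n n) F := by
  have h : (Finsupp.equivFunOnFinite.symm fun _ => n : Fin 2 →₀ ℕ) = bideg n n :=
    eq_bideg_iff.2 (by simp)
  rw [MvPowerSeries.diagonal, PowerSeries.coeff_mk, h]

section Monomials

variable [CommSemiring R]

lemma X_zero_pow_mul_X_one_pow (a b : ℕ) :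
    (MvPowerSeries.X 0 ^ a * MvPowerSeries.X 1 ^ b : MvPowerSeries (Fin 2) R) =
      MvPowerSeries.monomial (bideg a b) 1 := by
  rw [MvPowerSeries.X_pow_eq, MvPowerSeries.X_pow_eq, MvPowerSeries.monomial_mul_monomial,
    mul_one, bideg]

lemma coeff_mul_X_zero_pow_mul_X_one_pow (F : MvPowerSeries (Fin 2) R) (a b : ℕ)
    (d : Fin 2 →₀ ℕ) :
    MvPowerSeries.coeff d (F * (MvPowerSeries.X 0 ^ a * MvPowerSeries.X 1 ^ b)) =
      if a ≤ d 0 ∧ b ≤ d 1 then MvPowerSeries.coeff (bideg (d 0 - a) (d 1 - b)) F else 0 := by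
  simp only [X_zero_pow_mul_X_one_pow, MvPowerSeries.coeff_mul_monomial, bideg_le_iff,
    sub_bideg, mul_one]

lemma coeff_mul_X_one_pow (F : MvPowerSeries (Fin 2) R) (b : ℕ) (d : Fin 2 →₀ ℕ) :
    MvPowerSeries.coeff d (F * MvPowerSeries.X 1 ^ b) =
      if b ≤ d 1 then MvPowerSeries.coeff (bideg (d 0) (d 1 - b)) F else 0 := by
  simpa using coeff_mul_X_zero_pow_mul_X_one_pow F 0 b d

lemma coeff_mul_X_zero (F : MvPowerSeries (Fin 2) R) (d : Fin 2 →₀ ℕ) :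
    MvPowerSeries.coeff d (F * MvPowerSeries.X 0) =
      if 1 ≤ d 0 then MvPowerSeries.coeff (bideg (d 0 - 1) (d 1)) F else 0 := by
  simpa using coeff_mul_X_zero_pow_mul_X_one_pow F 1 0 d

lemma X_one_ne_zero [Nontrivial R] : (MvPowerSeries.X 1 : MvPowerSeries (Fin 2) R) ≠ 0 :=
  fun h => by simpa using congr_arg (MvPowerSeries.coeff (Finsupp.single 1 1)) h

end Monomials

section DiagEmbed

variable [CommRing R]

lemma hasSubst_X_zero_mul_X_one :
    PowerSeries.HasSubst (MvPowerSeries.X 0 * MvPowerSeries.X 1 : MvPowerSeries (Fin 2) R) :=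
  PowerSeries.HasSubst.of_constantCoeff_zero (by simp)

def diagEmbed : R⟦X⟧ →ₐ[R] MvPowerSeries (Fin 2) R :=
  PowerSeries.substAlgHom hasSubst_X_zero_mul_X_one

lemma coeff_diagEmbed (f : R⟦X⟧) (d : Fin 2 →₀ ℕ) :
    MvPowerSeries.coeff d (diagEmbed f) = if d 0 = d 1 then PowerSeries.coeff (d 0) f else 0 := by
  rw [diagEmbed, PowerSeries.coe_substAlgHom, PowerSeries.coeff_subst hasSubst_X_zero_mul_X_one]
  simp_rw [mul_pow, X_zero_pow_mul_X_one_pow, MvPowerSeries.coeff_monomial, eq_bideg_iff]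
  split_ifs with h
  · rw [finsum_eq_single _ (d 0) (fun n hn => by simp [Ne.symm hn])]
    simp [h]
  · exact finsum_eq_zero_of_forall_eq_zero fun n => by simp; omega

lemma diagEmbed_X : diagEmbed (PowerSeries.X : R⟦X⟧) = MvPowerSeries.X 0 * MvPowerSeries.X 1 :=
  PowerSeries.substAlgHom_X _

lemma add_apply_of_mem_antidiagonal {d : Fin 2 →₀ ℕ}
    {p : (Fin 2 →₀ ℕ) × (Fin 2 →₀ ℕ)} (hp : p ∈ Finset.HasAntidiagonal.antidiagonal d)
    (i : Fin 2) : p.1 i + p.2 i = d i := by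
  rw [Finset.HasAntidiagonal.mem_antidiagonal] at hp
  rw [← hp, Finsupp.add_apply]

lemma coeff_diagEmbed_mul (f : R⟦X⟧) (F : MvPowerSeries (Fin 2) R) (d : Fin 2 →₀ ℕ) :
    MvPowerSeries.coeff d (diagEmbed f * F) = ∑ m ∈ Finset.range (min (d 0) (d 1) + 1),
      PowerSeries.coeff m f * MvPowerSeries.coeff (bideg (d 0 - m) (d 1 - m)) F := by
  classical
  let ι : ℕ → (Fin 2 →₀ ℕ) × (Fin 2 →₀ ℕ) := fun m =>
    (bideg m m, bideg (d 0 - m) (d 1 - m))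
  have hι : Set.InjOn ι (Finset.range (min (d 0) (d 1) + 1)) := fun a _ b _ h => by
    simpa [ι] using congr_arg (fun p => p.1 0) h
  have hsub : (Finset.range (min (d 0) (d 1) + 1)).image ι ⊆
      Finset.HasAntidiagonal.antidiagonal d := by
    simp only [Finset.subset_iff, Finset.mem_image, Finset.mem_range,
      Finset.HasAntidiagonal.mem_antidiagonal]
    rintro _ ⟨m, hm, rfl⟩
    ext i; fin_cases i <;> simp [ι] <;> omega
  rw [MvPowerSeries.coeff_mul, ← Finset.sum_subset hsub, Finset.sum_image hι]
  · exact Finset.sum_congr rfl fun m _ => by simp [ι, coeff_diagEmbed]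
  · intro p hp hp_notMem
    rw [coeff_diagEmbed, if_neg, zero_mul]
    intro hdiag
    have h0 := add_apply_of_mem_antidiagonal hp 0
    have h1 := add_apply_of_mem_antidiagonal hp 1
    refine hp_notMem (Finset.mem_image.2 ⟨p.1 0, by simp; omega, ?_⟩)
    exact Prod.ext (eq_bideg_iff.2 ⟨rfl, hdiag.symm⟩).symm
      (eq_bideg_iff.2 ⟨by omega, by omega⟩).symm

lemma diagonal_diagEmbed_mul (f : R⟦X⟧) (F : MvPowerSeries (Fin 2) R) :
    diagonal (diagEmbed f * F) = f * diagonal F := by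
  ext n
  rw [coeff_diagonal, coeff_diagEmbed_mul, PowerSeries.coeff_mul,
    Finset.Nat.sum_antidiagonal_eq_sum_range_succ_mk]
  simp only [bideg_apply_zero, bideg_apply_one, min_self, coeff_diagonal]

lemma diagonal_diagEmbed (f : R⟦X⟧) : diagonal (diagEmbed f) = f := by
  have h : diagonal (1 : MvPowerSeries (Fin 2) R) = 1 := by
    ext n; simp [coeff_diagonal, MvPowerSeries.coeff_one, PowerSeries.coeff_one, eq_zero_iff_bideg]
  simpa [h] using diagonal_diagEmbed_mul f 1

/-- `1 / (1 - x g(xy)) = ∑ₖ xᵏ g(xy)ᵏ`, in which `xᵃ yᵇ` only occurs for `k = a - b`. -/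
def geomXY (g : R⟦X⟧) : MvPowerSeries (Fin 2) R :=
  fun d => if d 1 ≤ d 0 then PowerSeries.coeff (d 1) (g ^ (d 0 - d 1)) else 0

lemma coeff_geomXY (g : R⟦X⟧) (d : Fin 2 →₀ ℕ) :
    MvPowerSeries.coeff d (geomXY g) =
      if d 1 ≤ d 0 then PowerSeries.coeff (d 1) (g ^ (d 0 - d 1)) else 0 := rfl

lemma coeff_diagEmbed_mul_geomXY (g : R⟦X⟧) (d : Fin 2 →₀ ℕ) :
    MvPowerSeries.coeff d (diagEmbed g * geomXY g) =
      if d 1 ≤ d 0 then PowerSeries.coeff (d 1) (g ^ (d 0 - d 1 + 1)) else 0 := by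
  rw [coeff_diagEmbed_mul]
  split_ifs with h
  · rw [min_eq_right h, pow_succ', PowerSeries.coeff_mul,
      Finset.Nat.sum_antidiagonal_eq_sum_range_succ_mk]
    refine Finset.sum_congr rfl fun m hm => ?_
    rw [Finset.mem_range] at hm
    simp only [coeff_geomXY, bideg_apply_zero, bideg_apply_one]
    rw [if_pos (by omega), show d 0 - m - (d 1 - m) = d 0 - d 1 by omega]
  · refine Finset.sum_eq_zero fun m hm => ?_
    rw [Finset.mem_range] at hm
    simp only [coeff_geomXY, bideg_apply_zero, bideg_apply_one]
    rw [if_neg (by omega), mul_zero]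

lemma one_sub_X_zero_mul_diagEmbed_mul_geomXY (g : R⟦X⟧) :
    (1 - MvPowerSeries.X 0 * diagEmbed g) * geomXY g = 1 := by
  ext d
  rw [show (1 - MvPowerSeries.X 0 * diagEmbed g) * geomXY g =
      geomXY g - diagEmbed g * geomXY g * MvPowerSeries.X 0 by ring,
    map_sub, coeff_mul_X_zero, coeff_diagEmbed_mul_geomXY, MvPowerSeries.coeff_one,
    coeff_geomXY]
  simp only [bideg_apply_zero, bideg_apply_one, eq_zero_iff_bideg]
  rcases Nat.eq_zero_or_pos (d 0) with h0 | h0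
  · by_cases h1 : d 1 = 0 <;> simp [h0, h1]
  · rw [if_neg (by omega : ¬(d 0 = 0 ∧ d 1 = 0)), if_pos (by omega : 1 ≤ d 0)]
    rcases lt_trichotomy (d 1) (d 0) with h | h | h
    · rw [if_pos h.le, if_pos (by omega), show d 0 - 1 - d 1 + 1 = d 0 - d 1 by omega, sub_self]
    · rw [h, if_pos le_rfl, if_neg (by omega), Nat.sub_self, pow_zero, PowerSeries.coeff_one,
        if_neg h0.ne', sub_zero]
    · rw [if_neg (by omega), if_neg (by omega), sub_self]

lemma diagonal_X_one_mul_geomXY (g : R⟦X⟧) :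
    diagonal (MvPowerSeries.X 1 * geomXY g) = PowerSeries.X * g := by
  ext n
  rw [coeff_diagonal, mul_comm, ← pow_one (MvPowerSeries.X 1), coeff_mul_X_one_pow]
  rcases n with _ | n
  · simp
  · simp [coeff_geomXY, PowerSeries.coeff_succ_X_mul]

end DiagEmbed

section XLeY

variable [CommRing R]

def xLeYSubring : Subring (MvPowerSeries (Fin 2) R) where
  carrier := {F | ∀ d : Fin 2 →₀ ℕ, d 1 < d 0 → MvPowerSeries.coeff d F = 0}
  mul_mem' {F G} hF hG d hd := by
    rw [MvPowerSeries.coeff_mul]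
    refine Finset.sum_eq_zero fun p hp => ?_
    have h0 := add_apply_of_mem_antidiagonal hp 0
    have h1 := add_apply_of_mem_antidiagonal hp 1
    by_cases hp1 : p.1 1 < p.1 0
    · rw [hF _ hp1, zero_mul]
    · rw [hG _ (by omega), mul_zero]
  one_mem' d hd := by
    rw [MvPowerSeries.coeff_one, if_neg fun h => by simp [h] at hd]
  add_mem' {F G} hF hG d hd := by rw [map_add, hF d hd, hG d hd, add_zero]
  zero_mem' d _ := by simp
  neg_mem' {F} hF d hd := by rw [map_neg, hF d hd, neg_zero]

lemma diagEmbed_mem_xLeYSubring (f : R⟦X⟧) : diagEmbed f ∈ xLeYSubring := fun d hd => by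
  rw [coeff_diagEmbed, if_neg hd.ne']

lemma X_one_mem_xLeYSubring :
    MvPowerSeries.X 1 ∈ (xLeYSubring : Subring (MvPowerSeries (Fin 2) R)) :=
  fun d hd => by
    rw [MvPowerSeries.coeff_X, if_neg]
    rintro rfl
    simp at hd

lemma diagonal_X_one_mul_eq_zero {F : MvPowerSeries (Fin 2) R} (hF : F ∈ xLeYSubring) :
    diagonal (MvPowerSeries.X 1 * F) = 0 := by
  ext n
  rw [coeff_diagonal, mul_comm, ← pow_one (MvPowerSeries.X 1), coeff_mul_X_one_pow]
  split_ifs with hn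
  · exact hF _ (by simp only [bideg_apply_zero, bideg_apply_one] at hn ⊢; omega)
  · simp

end XLeY

lemma inv_mem_xLeYSubring {K : Type*} [Field K] {F : MvPowerSeries (Fin 2) K}
    (hF : F ∈ xLeYSubring) : F⁻¹ ∈ xLeYSubring := by
  classical
  intro d
  induction d using WellFoundedLT.induction with
  | _ d ih =>
    intro hd
    rw [MvPowerSeries.coeff_inv, if_neg (by rintro rfl; simp at hd)]
    refine mul_eq_zero_of_right _ (Finset.sum_eq_zero fun p hp => ?_)
    have h0 := add_apply_of_mem_antidiagonal hp 0
    have h1 := add_apply_of_mem_antidiagonal hp 1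
    split_ifs with hlt
    · by_cases hp2 : p.2 1 < p.2 0
      · rw [ih _ hlt hp2, mul_zero]
      · rw [hF _ (by omega), zero_mul]
    · rfl

section EvalXY

variable [CommRing R]

def evalXY : Polynomial R⟦X⟧ →+* MvPowerSeries (Fin 2) R :=
  Polynomial.eval₂RingHom diagEmbed.toRingHom (MvPowerSeries.X 1)

@[simp] lemma evalXY_X : evalXY (Polynomial.X : Polynomial R⟦X⟧) = MvPowerSeries.X 1 :=
  Polynomial.eval₂_X _ _

@[simp] lemma evalXY_C (f : R⟦X⟧) : evalXY (Polynomial.C f) = diagEmbed f :=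
  Polynomial.eval₂_C _ _

lemma evalXY_mem_xLeYSubring (p : Polynomial R⟦X⟧) : evalXY p ∈ xLeYSubring := by
  induction p using Polynomial.induction_on' with
  | add p q hp hq => rw [map_add]; exact add_mem hp hq
  | monomial n f =>
    simp only [evalXY, Polynomial.coe_eval₂RingHom, Polynomial.eval₂_monomial]
    exact mul_mem (diagEmbed_mem_xLeYSubring f) (pow_mem X_one_mem_xLeYSubring n)

lemma constantCoeff_evalXY (p : Polynomial R⟦X⟧) :
    MvPowerSeries.constantCoeff (evalXY p) = PowerSeries.constantCoeff (p.coeff 0) := by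
  rw [evalXY, Polynomial.coe_eval₂RingHom, Polynomial.hom_eval₂, MvPowerSeries.constantCoeff_X,
    Polynomial.eval₂_at_zero, RingHom.comp_apply,
    ← MvPowerSeries.coeff_zero_eq_constantCoeff_apply]
  simp [coeff_diagEmbed]

def toXY : Polynomial (Polynomial R) →+* MvPolynomial (Fin 2) R :=
  Polynomial.eval₂RingHom (Polynomial.aeval (MvPolynomial.X 0 * MvPolynomial.X 1)).toRingHom
    (MvPolynomial.X 1)

lemma coe_toXY_C (T : Polynomial R) :
    ((toXY (Polynomial.C T) : MvPolynomial (Fin 2) R) : MvPowerSeries (Fin 2) R) =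
      diagEmbed (T : R⟦X⟧) := by
  rw [toXY, Polynomial.coe_eval₂RingHom, Polynomial.eval₂_C, AlgHom.toRingHom_eq_coe,
    RingHom.coe_coe, diagEmbed, PowerSeries.substAlgHom_coe, ← MvPolynomial.coe_X,
    ← MvPolynomial.coe_X, ← MvPolynomial.coe_mul]
  exact (Polynomial.aeval_algHom_apply (MvPolynomial.coeToMvPowerSeries.algHom R) _ T).symm

lemma coe_toXY (p : Polynomial (Polynomial R)) :
    ((toXY p : MvPolynomial (Fin 2) R) : MvPowerSeries (Fin 2) R) =
      evalXY (p.map Polynomial.coeToPowerSeries.ringHom) := by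
  induction p using Polynomial.induction_on' with
  | add p q hp hq => simp only [map_add, Polynomial.map_add, MvPolynomial.coe_add, hp, hq]
  | monomial n T =>
    rw [← Polynomial.C_mul_X_pow_eq_monomial, map_mul, map_pow, MvPolynomial.coe_mul,
      MvPolynomial.coe_pow, coe_toXY_C, Polynomial.map_mul, Polynomial.map_pow, map_mul, map_pow]
    simp [toXY, evalXY]

lemma exists_X_one_mul_eq_toXY (Q : Polynomial (Polynomial R)) (hQ : (Q.coeff 0).coeff 0 = 0) :
    ∃ Q₂ : MvPolynomial (Fin 2) R, MvPolynomial.X 1 * Q₂ = toXY Q := by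
  have hQ0 := Polynomial.X_mul_divX_add (Q.coeff 0)
  rw [hQ, map_zero, add_zero] at hQ0
  refine ⟨toXY Q.divX + MvPolynomial.X 0 * toXY (Polynomial.C (Q.coeff 0).divX), ?_⟩
  conv_rhs => rw [← Polynomial.X_mul_divX_add Q, ← hQ0]
  simp only [toXY, AlgHom.toRingHom_eq_coe, Polynomial.coe_eval₂RingHom, Polynomial.eval₂_C,
    RingHom.coe_coe, map_mul, Polynomial.eval₂_add, Polynomial.eval₂_mul, Polynomial.eval₂_X,
    Polynomial.aeval_X]
  ring

lemma constantCoeff_coeff_zero_of_map_eq_mul {Q : Polynomial (Polynomial R)} {B : R⟦X⟧}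
    {S : Polynomial R⟦X⟧} (hB : PowerSeries.constantCoeff B = 0)
    (hS : Q.map Polynomial.coeToPowerSeries.ringHom = (Polynomial.X - Polynomial.C B) * S) :
    PowerSeries.constantCoeff (S.coeff 0) = (Q.coeff 1).coeff 0 := by
  have h := congr_arg (fun p => PowerSeries.constantCoeff (p.coeff 1)) hS
  simp only [Polynomial.coeff_map, sub_mul, Polynomial.coeff_sub, Polynomial.coeff_X_mul,
    Polynomial.coeff_C_mul] at h
  rw [map_sub, map_mul, hB, zero_mul, sub_zero] at h
  exact h.symm

end EvalXY

lemma exists_isRationalMvPS_diagonal_eq_of_root {K : Type*} [Field K] {B : K⟦X⟧}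
    {Q : Polynomial (Polynomial K)} (hB : PowerSeries.constantCoeff B = 0)
    (hQ₀ : (Q.coeff 0).coeff 0 = 0) (hQ₁ : (Q.coeff 1).coeff 0 ≠ 0)
    (hQB : Q.eval₂ Polynomial.coeToPowerSeries.ringHom B = 0) :
    ∃ F : MvPowerSeries (Fin 2) K, IsRationalMvPS F ∧ diagonal F = B := by
  obtain ⟨g, rfl⟩ := PowerSeries.X_dvd_iff.2 hB
  obtain ⟨S, hS⟩ : Polynomial.X - Polynomial.C (PowerSeries.X * g) ∣
      Q.map Polynomial.coeToPowerSeries.ringHom :=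
    Polynomial.dvd_iff_isRoot.2 (by rwa [Polynomial.IsRoot, Polynomial.eval_map])
  obtain ⟨Q₂, hQ₂⟩ := exists_X_one_mul_eq_toXY Q hQ₀
  have hQ₂_eq : (Q₂ : MvPowerSeries (Fin 2) K) =
      (1 - MvPowerSeries.X 0 * diagEmbed g) * evalXY S := by
    refine mul_left_cancel₀ X_one_ne_zero ?_
    have h := congr_arg (fun p : MvPolynomial (Fin 2) K => (p : MvPowerSeries (Fin 2) K)) hQ₂
    simp only [MvPolynomial.coe_mul, MvPolynomial.coe_X, coe_toXY, hS, map_mul, map_sub,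
      evalXY_X, evalXY_C, diagEmbed_X] at h
    rw [h]
    ring
  have hS₀ := constantCoeff_coeff_zero_of_map_eq_mul hB hS
  have hSxy : MvPowerSeries.constantCoeff (evalXY S) ≠ 0 := by
    rwa [constantCoeff_evalXY, hS₀]
  refine ⟨MvPowerSeries.X 1 * (geomXY g +
      MvPowerSeries.X 1 * (evalXY (Polynomial.derivative S) * (evalXY S)⁻¹)),
    ⟨MvPolynomial.X 1 * toXY (Polynomial.derivative Q), Q₂, ?_, ?_⟩, ?_⟩
  · rw [← MvPolynomial.coeff_coe, hQ₂_eq, MvPowerSeries.coeff_zero_eq_constantCoeff_apply,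
      map_mul, constantCoeff_evalXY, hS₀]
    simpa using hQ₁
  · have hQ' : evalXY (Polynomial.derivative (Q.map Polynomial.coeToPowerSeries.ringHom)) =
        evalXY S + (MvPowerSeries.X 1 - MvPowerSeries.X 0 * MvPowerSeries.X 1 * diagEmbed g) *
          evalXY (Polynomial.derivative S) := by
      rw [hS, Polynomial.derivative_mul, Polynomial.derivative_sub, Polynomial.derivative_X,
        Polynomial.derivative_C, sub_zero, one_mul]
      simp only [map_add, map_mul, map_sub, evalXY_X, evalXY_C, diagEmbed_X]
    rw [hQ₂_eq, MvPolynomial.coe_mul, coe_toXY, ← Polynomial.derivative_map, hQ',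
      MvPolynomial.coe_X]
    linear_combination (MvPowerSeries.X 1 * evalXY S) * one_sub_X_zero_mul_diagEmbed_mul_geomXY g +
      (MvPowerSeries.X 1 ^ 2 * (1 - MvPowerSeries.X 0 * diagEmbed g) *
        evalXY (Polynomial.derivative S)) * MvPowerSeries.mul_inv_cancel _ hSxy
  · rw [mul_add, MvPowerSeries.diagonal_add, diagonal_X_one_mul_geomXY,
      diagonal_X_one_mul_eq_zero, add_zero]
    exact mul_mem X_one_mem_xLeYSubring
      (mul_mem (evalXY_mem_xLeYSubring _) (inv_mem_xLeYSubring (evalXY_mem_xLeYSubring S)))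

lemma exists_comp_eq_C_X_pow_mul [CommRing R] [IsDomain R]
    {P : Polynomial (Polynomial R)} {T e : Polynomial R} {r s : ℕ} (hrs : r < s)
    (h₀ : Polynomial.X ^ (s + r + 1) ∣ P.eval T)
    (h₁ : (Polynomial.derivative P).eval T = Polynomial.X ^ r * e) (he : e.coeff 0 ≠ 0) :
    ∃ Q : Polynomial (Polynomial R),
      P.comp (Polynomial.C T + Polynomial.C (Polynomial.X ^ s) * Polynomial.X) =
        Polynomial.C (Polynomial.X ^ (s + r)) * Q ∧
      (Q.coeff 0).coeff 0 = 0 ∧ (Q.coeff 1).coeff 0 ≠ 0 := by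
  have hcoeff := Polynomial.coeff_comp_C_add_C_mul_X P T (Polynomial.X ^ s)
  obtain ⟨Q, hQ⟩ := (Polynomial.C_dvd_iff_dvd_coeff _ _).2 fun j => by
    rw [hcoeff]
    match j with
    | 0 => simpa using (pow_dvd_pow _ (Nat.le_succ _)).trans h₀
    | 1 => rw [Polynomial.hasseDeriv_one', h₁, pow_one, pow_add]; exact ⟨e, by ring⟩
    | j + 2 =>
      refine dvd_mul_of_dvd_right ?_ _
      rw [← pow_mul]
      exact pow_dvd_pow _ ((by omega : s + r ≤ s * 2).trans (Nat.mul_le_mul_left s (by omega)))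
  have hQj (j : ℕ) : Polynomial.X ^ (s + r) * Q.coeff j =
      (Polynomial.hasseDeriv j P).eval T * (Polynomial.X ^ s) ^ j := by
    rw [← hcoeff, hQ, Polynomial.coeff_C_mul]
  refine ⟨Q, hQ, ?_, ?_⟩
  · obtain ⟨c, hc⟩ := h₀
    have h : Polynomial.X ^ (s + r) * Q.coeff 0 = Polynomial.X ^ (s + r) * (Polynomial.X * c) := by
      rw [hQj 0, Polynomial.hasseDeriv_zero', hc]; ring
    rw [mul_left_cancel₀ (pow_ne_zero _ Polynomial.X_ne_zero) h, Polynomial.coeff_X_mul_zero]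
  · have h : Polynomial.X ^ (s + r) * Q.coeff 1 = Polynomial.X ^ (s + r) * e := by
      rw [hQj 1, Polynomial.hasseDeriv_one', h₁]; ring
    rwa [mul_left_cancel₀ (pow_ne_zero _ Polynomial.X_ne_zero) h]

lemma exists_eval₂_eq_zero_derivative_ne_zero {K : Type*} [Field K] [CharZero K] {A : K⟦X⟧}
    (hA : IsAlgebraicPS A) :
    ∃ P : Polynomial (Polynomial K), P.eval₂ Polynomial.coeToPowerSeries.ringHom A = 0 ∧
      (Polynomial.derivative P).eval₂ Polynomial.coeToPowerSeries.ringHom A ≠ 0 := by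
  classical
  have hex : ∃ n, ∃ P : Polynomial (Polynomial K), P ≠ 0 ∧
      P.eval₂ Polynomial.coeToPowerSeries.ringHom A = 0 ∧ P.natDegree = n :=
    let ⟨P, hP, hPA⟩ := hA; ⟨_, P, hP, hPA, rfl⟩
  obtain ⟨P, hP, hPA, hdeg⟩ := Nat.find_spec hex
  have hpos : P.natDegree ≠ 0 := fun h => by
    rw [Polynomial.eq_C_of_natDegree_eq_zero h, Polynomial.eval₂_C,
      Polynomial.coeToPowerSeries.ringHom_apply, Polynomial.coe_eq_zero_iff] at hPA
    exact hP (by rw [Polynomial.eq_C_of_natDegree_eq_zero h, hPA, map_zero])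
  refine ⟨P, hPA, fun hP'A => Nat.find_min hex (hdeg ▸ Polynomial.natDegree_derivative_lt hpos)
    ⟨_, fun h => hpos (Polynomial.derivative_eq_zero.1 h), hP'A, rfl⟩⟩

lemma exists_eval_eq_X_pow_mul [CommRing R] [IsDomain R]
    {p : Polynomial (Polynomial R)} {A u : R⟦X⟧} {T : Polynomial R} {r : ℕ}
    (hu : p.eval₂ Polynomial.coeToPowerSeries.ringHom A = PowerSeries.X ^ r * u)
    (hu₀ : PowerSeries.constantCoeff u ≠ 0)
    (hT : PowerSeries.X ^ (r + 1) ∣ (T : R⟦X⟧) - A) :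
    ∃ e : Polynomial R, p.eval T = Polynomial.X ^ r * e ∧ e.coeff 0 ≠ 0 := by
  obtain ⟨d, hd⟩ := hT
  obtain ⟨c, hc⟩ := Polynomial.sub_dvd_eval_sub (T : R⟦X⟧) A
    (p.map Polynomial.coeToPowerSeries.ringHom)
  rw [Polynomial.eval_map, Polynomial.eval_map, hu, hd] at hc
  have hpT : ((p.eval T : Polynomial R) : R⟦X⟧) =
      PowerSeries.X ^ r * (u + PowerSeries.X * d * c) := by
    rw [← Polynomial.coeToPowerSeries.ringHom_apply, ← Polynomial.eval₂_hom,
      Polynomial.coeToPowerSeries.ringHom_apply, eq_add_of_sub_eq hc]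
    ring
  obtain ⟨e, he⟩ := Polynomial.X_pow_dvd_coe_iff.1 ⟨_, hpT⟩
  have he' : (e : R⟦X⟧) = u + PowerSeries.X * d * c := by
    refine mul_left_cancel₀ (pow_ne_zero r PowerSeries.X_ne_zero) ?_
    rw [← hpT, he, Polynomial.coe_mul, Polynomial.coe_pow, Polynomial.coe_X]
  refine ⟨e, he, ?_⟩
  rw [← Polynomial.coeff_coe, he', PowerSeries.coeff_zero_eq_constantCoeff_apply]
  simpa using hu₀

lemma exists_eq_add_X_pow_mul_of_root {K : Type*} [Field K] {A : K⟦X⟧}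
    {P : Polynomial (Polynomial K)} (hP : P.eval₂ Polynomial.coeToPowerSeries.ringHom A = 0)
    (hP' : (Polynomial.derivative P).eval₂ Polynomial.coeToPowerSeries.ringHom A ≠ 0) :
    ∃ (s : ℕ) (T : Polynomial K) (B : K⟦X⟧) (Q : Polynomial (Polynomial K)),
      A = (T : K⟦X⟧) + PowerSeries.X ^ s * B ∧ PowerSeries.constantCoeff B = 0 ∧
      (Q.coeff 0).coeff 0 = 0 ∧ (Q.coeff 1).coeff 0 ≠ 0 ∧
      Q.eval₂ Polynomial.coeToPowerSeries.ringHom B = 0 := by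
  set r := ((Polynomial.derivative P).eval₂ Polynomial.coeToPowerSeries.ringHom A).order.toNat
  obtain ⟨u, hu, hu₀⟩ : ∃ u,
      (Polynomial.derivative P).eval₂ Polynomial.coeToPowerSeries.ringHom A =
        PowerSeries.X ^ r * u ∧ PowerSeries.constantCoeff u ≠ 0 :=
    ⟨_, PowerSeries.X_pow_order_mul_divXPowOrder.symm,
      by rwa [Ne, PowerSeries.constantCoeff_divXPowOrder_eq_zero_iff]⟩
  set s := r + 1
  obtain ⟨T, A', hA⟩ : ∃ (T : Polynomial K) (A' : K⟦X⟧),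
      A = (T : K⟦X⟧) + PowerSeries.X ^ (s + 1) * A' :=
    ⟨_, _, (PowerSeries.eq_X_pow_mul_shift_add_trunc (s + 1) A).trans (add_comm _ _)⟩
  have hTA : PowerSeries.X ^ (s + 1) ∣ (T : K⟦X⟧) - A := ⟨-A', by rw [hA]; ring⟩
  have h₀ : Polynomial.X ^ (s + r + 1) ∣ P.eval T := by
    rw [← Polynomial.X_pow_dvd_coe_iff, ← Polynomial.coeToPowerSeries.ringHom_apply,
      ← Polynomial.eval_map_apply, Polynomial.coeToPowerSeries.ringHom_apply,
      show s + r + 1 = s + 1 + r by omega]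
    refine Polynomial.pow_dvd_eval_of_eval_eq_zero (by omega) (by rwa [Polynomial.eval_map])
      ⟨u, by rw [Polynomial.derivative_map, Polynomial.eval_map, hu]⟩ hTA
  obtain ⟨e, he, he₀⟩ :=
    exists_eval_eq_X_pow_mul hu hu₀ ((pow_dvd_pow _ (by omega)).trans hTA)
  obtain ⟨Q, hQ, hQ₀, hQ₁⟩ := exists_comp_eq_C_X_pow_mul (by omega : r < s) h₀ he he₀
  have hAB : A = (T : K⟦X⟧) + PowerSeries.X ^ s * (PowerSeries.X * A') := hA.trans (by ring)
  refine ⟨s, T, PowerSeries.X * A', Q, hAB, by simp, hQ₀, hQ₁, ?_⟩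
  have h :=
    congr_arg (Polynomial.eval₂ Polynomial.coeToPowerSeries.ringHom (PowerSeries.X * A')) hQ
  rw [Polynomial.eval₂_comp, Polynomial.eval₂_mul, Polynomial.eval₂_C, Polynomial.eval₂_add,
    Polynomial.eval₂_mul, Polynomial.eval₂_C, Polynomial.eval₂_C, Polynomial.eval₂_X] at h
  simp only [Polynomial.coeToPowerSeries.ringHom_apply, Polynomial.coe_pow, Polynomial.coe_X,
    ← hAB, hP] at h
  exact (mul_eq_zero.1 h.symm).resolve_left (pow_ne_zero _ PowerSeries.X_ne_zero)

theorem exists_isRationalMvPS_diagonal_eq {K : Type*} [Field K] [CharZero K] {A : K⟦X⟧}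
    (hA : IsAlgebraicPS A) :
    ∃ F : MvPowerSeries (Fin 2) K, IsRationalMvPS F ∧ diagonal F = A := by
  obtain ⟨P, hP, hP'⟩ := exists_eval₂_eq_zero_derivative_ne_zero hA
  obtain ⟨s, T, B, Q, rfl, hB, hQ₀, hQ₁, hQB⟩ := exists_eq_add_X_pow_mul_of_root hP hP'
  obtain ⟨F, hF, rfl⟩ := exists_isRationalMvPS_diagonal_eq_of_root hB hQ₀ hQ₁ hQB
  have hX : (PowerSeries.X ^ s : K⟦X⟧) = ((Polynomial.X ^ s : Polynomial K) : K⟦X⟧) := by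
    simp
  refine ⟨diagEmbed (T : K⟦X⟧) + diagEmbed (PowerSeries.X ^ s) * F, ?_, ?_⟩
  · rw [hX, ← coe_toXY_C, ← coe_toXY_C]
    exact (IsRationalMvPS.coe _).add ((IsRationalMvPS.coe _).mul hF)
  · rw [MvPowerSeries.diagonal_add, diagonal_diagEmbed, diagonal_diagEmbed_mul]

end Furstenberg

end

/-- (Furstenberg) An algebraic power series over `ℂ` is the complete diagonal of a
rational power series in two variables. -/
theorem isAlgebraicPS_is_diagonal_of_rational (A : PowerSeries ℂ) (h : IsAlgebraicPS A) :
    ∃ (P Q : MvPolynomial (Fin 2) ℂ) (F : MvPowerSeries (Fin 2) ℂ),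
      MvPolynomial.coeff 0 Q ≠ 0 ∧
      (Q : MvPowerSeries (Fin 2) ℂ) * F = (P : MvPowerSeries (Fin 2) ℂ) ∧
      ∀ n : ℕ, MvPowerSeries.coeff (Finsupp.equivFunOnFinite.symm fun _ => n) F =
        PowerSeries.coeff n A := by
  obtain ⟨F, ⟨P, Q, hQ, hQF⟩, rfl⟩ := Furstenberg.exists_isRationalMvPS_diagonal_eq h
  exact ⟨P, Q, F, hQ, hQF, fun n => by rw [MvPowerSeries.diagonal, PowerSeries.coeff_mk]⟩
end

section
/- (Eisenstein–Heine) Let Σ aₙ zⁿ ∈ ℚ⟦z⟧ be a formal power series with rational coefficients that is algebraic over ℚ(z). Then there exist positive integers A and C such that for every n ≥ 0 the rational number C · Aⁿ · aₙ is an integer. -/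
open PowerSeries

/-! Choose an annihilating polynomial `P` of `F` with `P'(F) ≠ 0` (one of minimal degree), let `h`
be the order of `P'(F)` and split `F = S + X^(h+1) G` with `S` a polynomial. Expanding
`P(S + X^(h+1) Y)` in powers of `Y` and dividing by `X^(2h+1)` gives `Q(G) = 0` with
`Q ≡ a + u Y (mod X)`, `u ≠ 0`; hence `G = φ + X ∑ ψᵢ Gⁱ` for polynomials `φ, ψᵢ`. If `c` clears
the denominators of `S, φ, ψᵢ`, then `c · G(c^M X)` solves a fixed-point equation of the same shape
with integer coefficients, and such a solution has integer coefficients since it is determined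
coefficient by coefficient. -/

namespace PowerSeries

variable {K : Type*} [CommRing K] (R : Subring K)

def coeffsIn : Subring K⟦X⟧ where
  carrier := {f | ∀ n, coeff n f ∈ R}
  zero_mem' n := by simp [zero_mem]
  one_mem' n := by rw [coeff_one]; split_ifs <;> simp [zero_mem, one_mem]
  add_mem' hf hg n := by rw [map_add]; exact add_mem (hf n) (hg n)
  neg_mem' hf n := by rw [map_neg]; exact neg_mem (hf n)
  mul_mem' hf hg n := by
    rw [coeff_mul]; exact sum_mem fun p _ => mul_mem (hf p.1) (hg p.2)

variable {R}

theorem X_mem_coeffsIn : X ∈ coeffsIn R := fun n => by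
  rw [coeff_X]; split_ifs <;> simp [zero_mem, one_mem]

theorem C_mem_coeffsIn {a : K} (ha : a ∈ R) : C a ∈ coeffsIn R := fun n => by
  rw [coeff_C]; split_ifs <;> simp [ha, zero_mem]

theorem C_mul_rescale_mem_coeffsIn {a c : K} {f : K⟦X⟧} (ha : a ∈ R)
    (hf : C c * f ∈ coeffsIn R) : C c * rescale a f ∈ coeffsIn R := fun n => by
  have := hf n
  rw [coeff_C_mul] at this ⊢
  rw [coeff_rescale, mul_left_comm]
  exact mul_mem (pow_mem ha n) this

theorem coe_trunc_mem_coeffsIn {f : K⟦X⟧} {n : ℕ} (hf : ∀ m < n, coeff m f ∈ R) :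
    (trunc n f : K⟦X⟧) ∈ coeffsIn R := fun m => by
  rw [Polynomial.coeff_coe, coeff_trunc]
  split_ifs with hm
  exacts [hf m hm, zero_mem R]

theorem coeff_eq_of_X_pow_dvd_sub {f g : K⟦X⟧} {n : ℕ} (h : X ^ (n + 1) ∣ f - g) :
    coeff n f = coeff n g := by
  rw [← sub_eq_zero, ← map_sub]; exact X_pow_dvd_iff.mp h n n.lt_succ_self

theorem X_pow_dvd_sub_trunc (f : K⟦X⟧) (n : ℕ) : X ^ n ∣ f - (trunc n f : K⟦X⟧) :=
  ⟨_, sub_eq_of_eq_add (eq_X_pow_mul_shift_add_trunc n f)⟩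

theorem mem_coeffsIn_of_eq_add_X_mul {φ H : K⟦X⟧} {ψ : ℕ → K⟦X⟧} {M : ℕ}
    (hφ : φ ∈ coeffsIn R) (hψ : ∀ i < M, ψ i ∈ coeffsIn R)
    (hH : H = φ + X * ∑ i ∈ Finset.range M, ψ i * H ^ i) : H ∈ coeffsIn R := by
  intro n
  induction n using Nat.strong_induction_on with
  | _ n ih =>
    set T : K⟦X⟧ := (trunc n H : K⟦X⟧)
    have hT : T ∈ coeffsIn R := coe_trunc_mem_coeffsIn ih
    have hdiff : H - (φ + X * ∑ i ∈ Finset.range M, ψ i * T ^ i) =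
        X * ∑ i ∈ Finset.range M, ψ i * (H ^ i - T ^ i) := by
      nth_rw 1 [hH]
      simp only [mul_sub, Finset.sum_sub_distrib]
      ring
    have hdvd : X ^ (n + 1) ∣ H - (φ + X * ∑ i ∈ Finset.range M, ψ i * T ^ i) := by
      rw [hdiff, pow_succ']
      exact mul_dvd_mul_left X <| Finset.dvd_sum fun i _ =>
        dvd_mul_of_dvd_right ((X_pow_dvd_sub_trunc H n).trans (sub_dvd_pow_sub_pow H T i)) _
    rw [coeff_eq_of_X_pow_dvd_sub hdvd]
    refine add_mem hφ (mul_mem X_mem_coeffsIn (sum_mem fun i hi => ?_)) n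
    exact mul_mem (hψ i (Finset.mem_range.mp hi)) (pow_mem hT i)

theorem C_mul_rescale_mem_coeffsIn_of_eq_add_X_mul {c : K} (hc : c ∈ R)
    {φ G : K⟦X⟧} {ψ : ℕ → K⟦X⟧} {M : ℕ}
    (hφ : C c * φ ∈ coeffsIn R) (hψ : ∀ i < M, C c * ψ i ∈ coeffsIn R)
    (hG : G = φ + X * ∑ i ∈ Finset.range M, ψ i * G ^ i) :
    C c * rescale (c ^ M) G ∈ coeffsIn R := by
  refine mem_coeffsIn_of_eq_add_X_mul (φ := C c * rescale (c ^ M) φ)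
    (ψ := fun i => C (c ^ (M - i)) * (C c * rescale (c ^ M) (ψ i)))
    (C_mul_rescale_mem_coeffsIn (pow_mem hc M) hφ)
    (fun i hi => mul_mem (C_mem_coeffsIn (pow_mem hc _))
      (C_mul_rescale_mem_coeffsIn (pow_mem hc M) (hψ i hi))) ?_
  nth_rw 1 [hG]
  simp only [map_add, map_mul, map_sum, map_pow, rescale_X, mul_add, Finset.mul_sum]
  congr 1
  refine Finset.sum_congr rfl fun i hi => ?_
  have hpow : c ^ (M - i) * c ^ i = c ^ M :=
    pow_sub_mul_pow c (Finset.mem_range.mp hi).le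
  simp only [mul_pow, ← map_pow, ← hpow, map_mul]
  ring

end PowerSeries

open scoped Polynomial

theorem Rat.exists_nat_mul_mem_bot (t : Finset ℚ) :
    ∃ c : ℕ, 0 < c ∧ ∀ q ∈ t, (c * q : ℚ) ∈ (⊥ : Subring ℚ) := by
  refine ⟨∏ q ∈ t, q.den, Finset.prod_pos fun q _ => q.den_pos, fun q hq => ?_⟩
  rw [← Finset.mul_prod_erase t _ hq, Nat.cast_mul, mul_right_comm, den_mul_eq_num]
  exact mul_mem (intCast_mem _ _) (natCast_mem _ _)

theorem Polynomial.exists_nat_mul_mem_coeffsIn_bot (s : Finset ℚ[X]) :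
    ∃ c : ℕ, 0 < c ∧ ∀ p ∈ s, PowerSeries.C (c : ℚ) * (p : ℚ⟦X⟧) ∈ PowerSeries.coeffsIn ⊥ := by
  obtain ⟨c, hc, hcs⟩ := Rat.exists_nat_mul_mem_bot (s.biUnion coeffs)
  refine ⟨c, hc, fun p hp n => ?_⟩
  rw [PowerSeries.coeff_C_mul, coeff_coe]
  by_cases hpn : p.coeff n = 0
  · rw [hpn, mul_zero]; exact zero_mem _
  · exact hcs _ (Finset.mem_biUnion.mpr ⟨p, hp, coeff_mem_coeffs hpn⟩)

theorem IsAlgebraic.exists_aeval_eq_zero_aeval_derivative_ne_zero {R A : Type*} [CommRing R]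
    [IsAddTorsionFree R] [CommRing A] [Algebra R A] (hinj : Function.Injective (algebraMap R A))
    {x : A} (hx : IsAlgebraic R x) :
    ∃ p : R[X], Polynomial.aeval x p = 0 ∧ Polynomial.aeval x (Polynomial.derivative p) ≠ 0 := by
  obtain ⟨p, hp0, hpx⟩ := hx
  induction hn : p.natDegree using Nat.strong_induction_on generalizing p with
  | _ n ih =>
    by_cases hd : Polynomial.aeval x (Polynomial.derivative p) = 0
    · have hn0 : p.natDegree ≠ 0 := fun h0 => hp0 <| by
        rw [Polynomial.eq_C_of_natDegree_eq_zero h0, Polynomial.aeval_C,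
          map_eq_zero_iff _ hinj] at hpx
        rw [Polynomial.eq_C_of_natDegree_eq_zero h0, hpx, map_zero]
      exact ih _ (hn ▸ Polynomial.natDegree_derivative_lt hn0) _
        (mt Polynomial.derivative_eq_zero.mp hn0) hd rfl
    · exact ⟨p, hpx, hd⟩

theorem Polynomial.X_pow_dvd_coeff_zero_of_aeval_eq_zero {K : Type*} [CommRing K]
    {Q : K[X][X]} {G : K⟦X⟧} (hQ : aeval G Q = 0) {k : ℕ}
    (h : ∀ i, 1 ≤ i → X ^ k ∣ Q.coeff i) : X ^ k ∣ Q.coeff 0 := by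
  have hdivX : C (X ^ k) ∣ Q.divX :=
    (C_dvd_iff_dvd_coeff _ _).mpr fun i => by rw [coeff_divX]; exact h _ i.succ_pos
  have hsplit : aeval G Q.divX * G + (Q.coeff 0 : K⟦X⟧) = 0 := by
    rw [← hQ]; conv_rhs => rw [← divX_mul_X_add Q]
    rw [map_add, map_mul, aeval_X, aeval_C]; rfl
  have hcoe : (PowerSeries.X ^ k : K⟦X⟧) ∣ (Q.coeff 0 : K⟦X⟧) := by
    rw [eq_neg_of_add_eq_zero_right hsplit]
    refine (Dvd.dvd.mul_right ?_ G).neg_right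
    simpa [PowerSeries.algebraMap_apply'] using _root_.map_dvd (aeval G) hdivX
  simpa only [PowerSeries.X_pow_dvd_iff, X_pow_dvd_iff, coeff_coe] using hcoe

theorem exists_eq_add_X_pow_mul_of_aeval_eq_zero {K : Type*} [CommRing K] [IsDomain K]
    {P : K[X][X]} {F : K⟦X⟧} (hP : Polynomial.aeval F P = 0)
    (hD : Polynomial.aeval F (Polynomial.derivative P) ≠ 0) :
    ∃ (s : ℕ) (S : K[X]) (G : K⟦X⟧) (Q : K[X][X]), F = (S : K⟦X⟧) + X ^ s * G ∧
      Polynomial.aeval G Q = 0 ∧ (Q.coeff 1).coeff 0 ≠ 0 ∧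
      ∀ i, 2 ≤ i → (Q.coeff i).coeff 0 = 0 := by
  set D := Polynomial.aeval F (Polynomial.derivative P)
  set h := D.order.toNat
  set s := h + 1
  set S := trunc s F
  set G : K⟦X⟧ := mk fun i => coeff (i + s) F
  have hF : F = (S : K⟦X⟧) + X ^ s * G := by rw [add_comm]; exact eq_X_pow_mul_shift_add_trunc s F
  set T := Polynomial.taylor S P
  -- `Q₁(Y) = P(S + X^s Y)`
  set Q₁ := T.comp (Polynomial.C (Polynomial.X ^ s) * Polynomial.X)
  have hQ₁ : Polynomial.aeval G Q₁ = 0 := by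
    rw [← hP, hF]
    simp [Q₁, T, Polynomial.aeval_comp, Polynomial.taylor_apply, algebraMap_apply', add_comm]
  have hT₁ : ∀ j < s, (T.coeff 1).coeff j = coeff j D := by
    have hdvd : X ^ s ∣ D - (T.coeff 1 : K⟦X⟧) := by
      have hsub := Polynomial.sub_dvd_eval_sub F S
        (Polynomial.map (algebraMap K[X] K⟦X⟧) (Polynomial.derivative P))
      have hS : Polynomial.aeval (R := K[X]) (S : K⟦X⟧) (Polynomial.derivative P) =
          ((Polynomial.eval S (Polynomial.derivative P) : K[X]) : K⟦X⟧) := by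
        rw [← Polynomial.coe_aeval_eq_eval]
        exact Polynomial.aeval_algebraMap_apply K⟦X⟧ S _
      rw [Polynomial.eval_map_algebraMap, Polynomial.eval_map_algebraMap, hS] at hsub
      rw [Polynomial.taylor_coeff_one]
      refine dvd_trans ⟨G, ?_⟩ hsub
      rw [hF]; ring
    intro j hj
    rw [← Polynomial.coeff_coe, eq_comm, ← sub_eq_zero, ← map_sub]
    exact X_pow_dvd_iff.mp hdvd j hj
  have hQ₁coeff (i : ℕ) : Q₁.coeff i = T.coeff i * Polynomial.X ^ (s * i) := by
    rw [Polynomial.comp_C_mul_X_coeff, pow_mul]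
  have hdvd₁ : Polynomial.X ^ (s + h) ∣ Q₁.coeff 1 := by
    rw [hQ₁coeff, mul_one, pow_add, mul_comm (Polynomial.X ^ s)]
    refine mul_dvd_mul_right (Polynomial.X_pow_dvd_iff.mpr fun j hj => ?_) _
    rw [hT₁ j (by omega)]
    exact coeff_of_lt_order_toNat j hj
  have hsi : ∀ i, 2 ≤ i → s + h < s * i := fun i hi => by
    have := Nat.mul_le_mul_left s hi
    omega
  have hdvd₂ : ∀ i, 2 ≤ i → Polynomial.X ^ (s + h) ∣ Q₁.coeff i := fun i hi => by
    rw [hQ₁coeff]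
    exact dvd_mul_of_dvd_right (pow_dvd_pow _ (hsi i hi).le) _
  have hdvd : ∀ i, Polynomial.X ^ (s + h) ∣ Q₁.coeff i := by
    have hpos : ∀ i, 1 ≤ i → Polynomial.X ^ (s + h) ∣ Q₁.coeff i := fun i hi =>
      (eq_or_lt_of_le hi).elim (fun h1 => h1 ▸ hdvd₁) (hdvd₂ i)
    rintro (_ | i)
    exacts [Polynomial.X_pow_dvd_coeff_zero_of_aeval_eq_zero hQ₁ hpos, hpos _ i.succ_pos]
  obtain ⟨Q, hQ⟩ := (Polynomial.C_dvd_iff_dvd_coeff _ _).mpr hdvd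
  have hQcoeff (i : ℕ) : (Q.coeff i).coeff 0 = (Q₁.coeff i).coeff (s + h) := by
    rw [hQ, Polynomial.coeff_C_mul, Polynomial.coeff_X_pow_mul', if_pos le_rfl, Nat.sub_self]
  refine ⟨s, S, G, Q, hF, ?_, ?_, fun i hi => ?_⟩
  · have hX : (X ^ (s + h) : K⟦X⟧) ≠ 0 := pow_ne_zero _ X_ne_zero
    rw [hQ, map_mul, Polynomial.aeval_C] at hQ₁
    simpa [PowerSeries.algebraMap_apply', hX] using hQ₁
  · rw [hQcoeff, hQ₁coeff, mul_one, add_comm, Polynomial.coeff_mul_X_pow, hT₁ h (by omega)]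
    exact coeff_order hD
  · rw [hQcoeff, hQ₁coeff, Polynomial.coeff_mul_X_pow', if_neg (hsi i hi).not_ge]

theorem exists_eq_add_X_mul_sum_of_aeval_eq_zero {K : Type*} [Field K] {Q : K[X][X]}
    {G : K⟦X⟧} (hQ : Polynomial.aeval G Q = 0) (hu : (Q.coeff 1).coeff 0 ≠ 0)
    (hQ2 : ∀ i, 2 ≤ i → (Q.coeff i).coeff 0 = 0) :
    ∃ (φ : K[X]) (ψ : ℕ → K[X]) (M : ℕ),
      G = (φ : K⟦X⟧) + X * ∑ i ∈ Finset.range M, (ψ i : K⟦X⟧) * G ^ i := by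
  set u := (Q.coeff 1).coeff 0
  set a := (Q.coeff 0).coeff 0
  have hQ0 : Q.map Polynomial.constantCoeff = Polynomial.C a + Polynomial.C u * Polynomial.X := by
    ext (_ | _ | i) <;> simp [hQ2, a, u]
  obtain ⟨Q', hQ'⟩ : Polynomial.C Polynomial.X ∣
      Q - (Q.map Polynomial.constantCoeff).map (algebraMap K K[X]) := by
    rw [Polynomial.C_dvd_iff_dvd_coeff]
    intro i
    simp [Polynomial.X_dvd_iff]
  have hsplit : C a + C u * G + X * Polynomial.aeval G Q' = 0 := by
    rw [← hQ, eq_add_of_sub_eq hQ', map_add, Polynomial.aeval_map_algebraMap, hQ0]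
    simp only [map_add, map_mul, Polynomial.aeval_C, Polynomial.aeval_X, algebraMap_apply',
      Algebra.algebraMap_self, map_X, algebraMap_eq, Polynomial.coe_X]
    ring
  refine ⟨Polynomial.C (-a / u), fun i => Polynomial.C (-u⁻¹) * Q'.coeff i, Q'.natDegree + 1, ?_⟩
  rw [Polynomial.aeval_eq_sum_range] at hsplit
  have hCu : C u⁻¹ * C u = 1 := by rw [← map_mul, inv_mul_cancel₀ hu, map_one]
  have hsmul (p : K[X]) (f : K⟦X⟧) : p • f = (p : K⟦X⟧) * f := rfl
  simp only [hsmul] at hsplit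
  simp only [Polynomial.coe_mul, Polynomial.coe_neg, Polynomial.coe_C, div_eq_mul_inv, map_neg,
    map_mul, mul_assoc, ← Finset.mul_sum]
  linear_combination C u⁻¹ * hsplit - G * hCu

/-- (Eisenstein–Heine) If `Σ aₙ zⁿ ∈ ℚ⟦z⟧` is algebraic over `ℚ(z)`, then there are
positive integers `A` and `C` such that `C · Aⁿ · aₙ` is an integer for all `n`. -/
theorem eisenstein_heine (F : PowerSeries ℚ) (h : IsAlgebraicPS F) :
    ∃ A C : ℕ, 0 < A ∧ 0 < C ∧
      ∀ n : ℕ, ∃ m : ℤ, (m : ℚ) = (C : ℚ) * (A : ℚ) ^ n * PowerSeries.coeff n F := by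
  obtain ⟨P, hP, hD⟩ :=
    IsAlgebraic.exists_aeval_eq_zero_aeval_derivative_ne_zero (Polynomial.coe_injective ℚ) h
  obtain ⟨s, S, G, Q, hF, hQ, hu, hQ2⟩ := exists_eq_add_X_pow_mul_of_aeval_eq_zero hP hD
  obtain ⟨φ, ψ, M, hG⟩ := exists_eq_add_X_mul_sum_of_aeval_eq_zero hQ hu hQ2
  obtain ⟨c, hc, hcs⟩ := Polynomial.exists_nat_mul_mem_coeffsIn_bot
    (insert S (insert φ ((Finset.range M).image ψ)))
  have hcR : (c : ℚ) ∈ (⊥ : Subring ℚ) := natCast_mem _ c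
  have hGint := C_mul_rescale_mem_coeffsIn_of_eq_add_X_mul hcR (hcs φ (by simp))
    (fun i hi => hcs (ψ i) (Finset.mem_insert_of_mem (Finset.mem_insert_of_mem
      (Finset.mem_image_of_mem ψ (Finset.mem_range.mpr hi))))) hG
  have hFint : C (c : ℚ) * rescale ((c : ℚ) ^ M) F ∈ coeffsIn ⊥ := by
    rw [hF, map_add, map_mul, map_pow, rescale_X, mul_add, mul_left_comm]
    exact add_mem (C_mul_rescale_mem_coeffsIn (pow_mem hcR M) (hcs S (by simp)))
      (mul_mem (pow_mem (mul_mem (C_mem_coeffsIn (pow_mem hcR M)) X_mem_coeffsIn) s) hGint)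
  refine ⟨c ^ M, c, pow_pos hc M, hc, fun n => ?_⟩
  obtain ⟨m, hm⟩ := Subring.mem_bot.mp (hFint n)
  exact ⟨m, by rw [hm, coeff_C_mul, coeff_rescale]; push_cast; ring⟩
end

section
/- Let A = Σ aₙ zⁿ ∈ ℚ⟦z⟧ be a formal power series with rational coefficients of finite Hadamard grade over ℚ. Then there are only finitely many primes dividing at least one of the denominators of the aₙ: there exists a finite set S of primes such that for every n, every prime divisor of the denominator of aₙ (in lowest terms) belongs to S. -/
open PowerSeries

/-!
Eisenstein's theorem: choose `P ∈ ℚ[z][y]` with `P(A) = 0 ≠ P'(A)` and let `c zᵏ` be the leading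
term of `P'(A)`. Splitting `A = Aₙ + zⁿ Rₙ` with `Aₙ` the truncation below degree `n > k`, Taylor
expansion gives `0 = P(A) ≡ P(Aₙ) + c aₙ z^(n+k) (mod z^(n+k+1))`, so `aₙ = -c⁻¹ [z^(n+k)] P(Aₙ)` is
a polynomial expression in `c⁻¹`, `a₀, …, a_{n-1}` and the coefficients of `P`. Hence every `aₙ`
lies in the subring of `ℚ` generated by finitely many rationals, whose denominators involve only
finitely many primes. A Hadamard product multiplies coefficients, so the primes of the factors
suffice.
-/

namespace Rat

def denPrimesSubring (S : Set ℕ) : Subring ℚ where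
  carrier := {x | ∀ p, p.Prime → p ∣ x.den → p ∈ S}
  zero_mem' p hp hpd := absurd (Nat.dvd_one.1 hpd) hp.ne_one
  one_mem' p hp hpd := absurd (Nat.dvd_one.1 hpd) hp.ne_one
  add_mem' {x y} hx hy p hp hpd :=
    ((Nat.Prime.dvd_mul hp).1 (hpd.trans (add_den_dvd x y))).elim (hx p hp) (hy p hp)
  mul_mem' {x y} hx hy p hp hpd :=
    ((Nat.Prime.dvd_mul hp).1 (hpd.trans (mul_den_dvd x y))).elim (hx p hp) (hy p hp)
  neg_mem' {x} hx p hp hpd := hx p hp (by rwa [neg_den] at hpd)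

theorem mem_denPrimesSubring {S : Set ℕ} {x : ℚ} :
    x ∈ denPrimesSubring S ↔ ∀ p, p.Prime → p ∣ x.den → p ∈ S :=
  Iff.rfl

theorem mem_denPrimesSubring_biUnion {T : Finset ℚ} {x : ℚ} (hx : x ∈ T) :
    x ∈ denPrimesSubring ↑(T.biUnion fun y => y.den.primeFactors) := fun _ hp hpd =>
  Finset.mem_biUnion.2 ⟨x, hx, Nat.mem_primeFactors.2 ⟨hp, hpd, x.den_nz⟩⟩

end Rat

namespace Polynomial

theorem exists_eval₂_eq_zero_and_derivative_ne_zero {R S : Type*} [Semiring R]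
    [IsAddTorsionFree R] [CommSemiring S] {f : R →+* S} (hf : Function.Injective f) {x : S}
    {P : R[X]} (hP : P ≠ 0) (hPx : P.eval₂ f x = 0) :
    ∃ Q : R[X], Q.eval₂ f x = 0 ∧ Q.derivative.eval₂ f x ≠ 0 := by
  induction h : P.natDegree using Nat.strong_induction_on generalizing P with
  | _ d ih =>
  by_cases hP'x : P.derivative.eval₂ f x = 0
  · have hdeg : P.natDegree ≠ 0 := by
      intro hdeg
      rw [eq_C_of_natDegree_eq_zero hdeg, eval₂_C, ← map_zero f] at hPx
      exact hP (by rw [eq_C_of_natDegree_eq_zero hdeg, hf hPx, map_zero])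
    exact ih _ (h ▸ natDegree_derivative_lt hdeg) (derivative_ne_zero.2 hdeg) hP'x rfl
  · exact ⟨P, hPx, hP'x⟩

end Polynomial

namespace PowerSeries

theorem mem_range_map_subtype {R : Type*} [Ring R] {T : Subring R} {f : R⟦X⟧} :
    f ∈ (map T.subtype).range ↔ ∀ n, coeff n f ∈ T :=
  ⟨by rintro ⟨g, rfl⟩ n; simp, fun h => ⟨f.toSubring T h, map_toSubring f T h⟩⟩

variable {R : Type*} [CommRing R]

/-- First-order Taylor expansion of `F` at `A`, read off in degree `n + k`. -/
theorem coeff_eval_eq_of_X_pow_dvd_sub (F : Polynomial R⟦X⟧) {A x : R⟦X⟧} {k n : ℕ} (hkn : k < n)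
    (hk : X ^ k ∣ F.derivative.eval A) (hn : X ^ n ∣ A - x) :
    coeff (n + k) (F.eval A) =
      coeff (n + k) (F.eval x) + coeff k (F.derivative.eval A) * coeff n (A - x) := by
  obtain ⟨M, hM⟩ := F.binomExpansion A (x - A)
  obtain ⟨B, hB⟩ := hk
  obtain ⟨z, hz⟩ := hn
  have hx : F.eval x = F.eval A - X ^ (n + k) * (B * z) + X ^ (n + n) * (M * z ^ 2) := by
    rw [add_sub_cancel, hB, show x - A = -(X ^ n * z) by rw [← hz]; ring] at hM
    rw [hM]
    ring
  have hsq : coeff (n + k) (X ^ (n + n) * (M * z ^ 2)) = 0 := by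
    rw [coeff_X_pow_mul', if_neg (by omega)]
  rw [hx, map_add, map_sub, hsq, hB, hz, coeff_X_pow_mul', if_pos le_rfl, coeff_X_pow_mul',
    if_pos le_rfl, coeff_X_pow_mul', if_pos le_rfl]
  simp [coeff_zero_eq_constantCoeff]

theorem coeff_mem_of_eval_eq_zero {T : Subring R} {F : Polynomial R⟦X⟧} {A : R⟦X⟧} {k : ℕ} {u : R}
    (hF : ∀ j i, coeff i (F.coeff j) ∈ T) (hFA : F.eval A = 0)
    (hk : X ^ k ∣ F.derivative.eval A) (hu : u * coeff k (F.derivative.eval A) = 1)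
    (huT : u ∈ T) (hinit : ∀ n ≤ k, coeff n A ∈ T) (n : ℕ) : coeff n A ∈ T := by
  induction n using Nat.strong_induction_on with
  | _ n ih =>
  rcases le_or_gt n k with hnk | hkn
  · exact hinit n hnk
  have htrunc : (trunc n A : R⟦X⟧) ∈ (map T.subtype).range := mem_range_map_subtype.2 fun i => by
    rw [Polynomial.coeff_coe, coeff_trunc]
    split_ifs with hi
    exacts [ih i hi, zero_mem T]
  have heval : F.eval (trunc n A : R⟦X⟧) ∈ (map T.subtype).range := by
    rw [Polynomial.eval_eq_sum_range]
    exact sum_mem fun i _ => mul_mem (mem_range_map_subtype.2 (hF i)) (pow_mem htrunc i)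
  have hsplit : A - (trunc n A : R⟦X⟧) = X ^ n * mk fun i => coeff (i + n) A :=
    sub_eq_of_eq_add (eq_X_pow_mul_shift_add_trunc n A)
  have hrec := coeff_eval_eq_of_X_pow_dvd_sub F hkn hk (hsplit ▸ dvd_mul_right _ _)
  rw [hFA, hsplit, coeff_X_pow_mul', if_pos le_rfl, Nat.sub_self, coeff_mk, zero_add,
    map_zero] at hrec
  have han : coeff n A = -(u * coeff (n + k) (F.eval (trunc n A : R⟦X⟧))) := by
    linear_combination (-u) * hrec - coeff n A * hu
  rw [han]
  exact neg_mem (mul_mem huT (mem_range_map_subtype.1 heval _))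

end PowerSeries

open Polynomial (coeToPowerSeries) in
theorem IsAlgebraicPS.exists_forall_coeff_mem_denPrimesSubring {A : ℚ⟦X⟧} (hA : IsAlgebraicPS A) :
    ∃ S : Finset ℕ, ∀ n, coeff n A ∈ Rat.denPrimesSubring S := by
  obtain ⟨P₀, hP₀, hP₀A⟩ := hA
  obtain ⟨P, hPA, hP'A⟩ := Polynomial.exists_eval₂_eq_zero_and_derivative_ne_zero
    (Polynomial.coe_injective ℚ) hP₀ hP₀A
  set F := P.map coeToPowerSeries.ringHom
  have hFA : F.eval A = 0 := by rwa [Polynomial.eval_map]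
  have hF'A : F.derivative.eval A ≠ 0 := by rwa [Polynomial.derivative_map, Polynomial.eval_map]
  set k := (F.derivative.eval A).order.toNat
  have hc : coeff k (F.derivative.eval A) ≠ 0 := coeff_order hF'A
  let T : Finset ℚ := insert (coeff k (F.derivative.eval A))⁻¹
    ((Finset.range (k + 1)).image (coeff · A) ∪ P.support.biUnion fun j => (P.coeff j).coeffs)
  refine ⟨T.biUnion fun y => y.den.primeFactors, coeff_mem_of_eval_eq_zero ?_ hFA
    X_pow_order_dvd (inv_mul_cancel₀ hc)
    (Rat.mem_denPrimesSubring_biUnion (Finset.mem_insert_self _ _)) ?_⟩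
  · intro j i
    rw [Polynomial.coeff_map, coeToPowerSeries.ringHom_apply, Polynomial.coeff_coe]
    by_cases hji : (P.coeff j).coeff i = 0
    · rw [hji]
      exact zero_mem _
    · refine Rat.mem_denPrimesSubring_biUnion ?_
      have hj : P.coeff j ≠ 0 := fun h => hji (by rw [h, Polynomial.coeff_zero])
      simp only [T, Finset.mem_insert, Finset.mem_union, Finset.mem_biUnion]
      exact Or.inr (Or.inr ⟨j, Polynomial.mem_support_iff.2 hj, Polynomial.coeff_mem_coeffs hji⟩)
  · intro n hn
    exact Rat.mem_denPrimesSubring_biUnion (Finset.mem_insert_of_mem (Finset.mem_union_left _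
      (Finset.mem_image_of_mem _ (Finset.mem_range.2 (Nat.lt_succ_of_le hn)))))

/-- If `A ∈ ℚ⟦z⟧` has finite Hadamard grade over `ℚ`, then only finitely many primes
divide the denominator of some coefficient of `A`. -/
theorem finitely_many_primes_in_denominators (A : PowerSeries ℚ)
    (h : ∃ d : ℕ, HadamardGradeLe A d) :
    ∃ S : Finset ℕ, ∀ n : ℕ, ∀ p : ℕ, p.Prime →
      p ∣ (PowerSeries.coeff n A).den → p ∈ S := by
  obtain ⟨d, B, hB, hAB⟩ := h
  choose S hS using fun i => (hB i).exists_forall_coeff_mem_denPrimesSubring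
  refine ⟨Finset.univ.biUnion S, fun n => Rat.mem_denPrimesSubring.1 ?_⟩
  rw [hAB n]
  refine prod_mem fun i _ p hp hpd => ?_
  exact Finset.mem_biUnion.2 ⟨i, Finset.mem_univ i, hS i n p hp hpd⟩
end
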